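/- arXiv:1609.05565 — 8 statements merged into one kernel-verified Lean document; each statement's English description precedes it below -/
import Mathlib

section
/- Let E be a real normed vector space, let 0 < β ≤ 1, let C ≥ 1, and let n ≥ 1. Suppose g_0, …, g_{n−1} : E → E are maps, each differentiable at every point of E, such that ‖Dg_i(x)‖ ≤ C for all x ∈ E and ‖Dg_i(x) − Dg_i(y)‖ ≤ C ‖x − y‖^β for all x, y ∈ E and all 0 ≤ i ≤ n−1. Let h = g_{n−1} ∘ g_{n−2} ∘ ⋯ ∘ g_0. Then h is differentiable at every point of E and: (1) ‖Dh(x)‖ ≤ C^n for every x ∈ E; and (2) ‖Dh(x) − Dh(y)‖ ≤ n · C^{n(1+β)} · ‖x − y‖^β for all x, y ∈ E. -/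
/-!
If `f` has derivative bounded by `A₁` (hence is `A₁`-Lipschitz) and `β`-Hölder with constant `B₁`,
the chain rule and the splitting
`g'(f x) f'(x) - g'(f y) f'(y) = (g'(f x) - g'(f y)) f'(x) + g'(f y) (f'(x) - f'(y))`
show that for `g = g_i` the map `g ∘ f` has derivative bounded by `C A₁` and `β`-Hölder with
constant `C A₁^(1+β) + C B₁`. Composing one map at a time, with `A₁ = C^k` and
`B₁ = k C^(k(1+β))`, the new Hölder constant is `(k+1) C^(k(1+β)+1) ≤ (k+1) C^((k+1)(1+β))`
since `C ≥ 1`.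
-/

open Real

theorem holderConst_succ_le {C β : ℝ} (hC : 1 ≤ C) (hβ : 0 ≤ β) (k : ℕ) :
    C * (C ^ k) ^ β * C ^ k + C * (k * C ^ ((k : ℝ) * (1 + β)))
      ≤ (k + 1) * C ^ (((k : ℝ) + 1) * (1 + β)) := by
  have hC0 : 0 < C := one_pos.trans_le hC
  have hpow : C ^ k * (C ^ k) ^ β = C ^ ((k : ℝ) * (1 + β)) := by
    rw [mul_one_add, rpow_add hC0, rpow_mul hC0.le, rpow_natCast]
  have hC_le : C ≤ C ^ (1 + β) := self_le_rpow_of_one_le hC (by linarith)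
  calc C * (C ^ k) ^ β * C ^ k + C * (k * C ^ ((k : ℝ) * (1 + β)))
      = (k + 1) * (C ^ ((k : ℝ) * (1 + β)) * C) := by
        rw [mul_assoc C, mul_comm _ (C ^ k), hpow]; ring
    _ ≤ (k + 1) * (C ^ ((k : ℝ) * (1 + β)) * C ^ (1 + β)) := by gcongr
    _ = (k + 1) * C ^ (((k : ℝ) + 1) * (1 + β)) := by rw [← rpow_add hC0]; ring_nf

section

variable {E F G : Type*} [NormedAddCommGroup E] [NormedSpace ℝ E]
  [NormedAddCommGroup F] [NormedSpace ℝ F] [NormedAddCommGroup G] [NormedSpace ℝ G]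

structure BoundedHolderFDeriv (A B β : ℝ) (f : E → F) : Prop where
  differentiable : Differentiable ℝ f
  norm_fderiv_le : ∀ x, ‖fderiv ℝ f x‖ ≤ A
  norm_fderiv_sub_le : ∀ x y, ‖fderiv ℝ f x - fderiv ℝ f y‖ ≤ B * ‖x - y‖ ^ β

namespace BoundedHolderFDeriv

variable {A B A₁ B₁ A₂ B₂ β : ℝ}

theorem of_hasFDerivAt {f : E → F} {f' : E → E →L[ℝ] F} (hf : ∀ x, HasFDerivAt f (f' x) x)
    (hbound : ∀ x, ‖f' x‖ ≤ A) (hHolder : ∀ x y, ‖f' x - f' y‖ ≤ B * ‖x - y‖ ^ β) :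
    BoundedHolderFDeriv A B β f where
  differentiable x := (hf x).differentiableAt
  norm_fderiv_le x := by rw [(hf x).fderiv]; exact hbound x
  norm_fderiv_sub_le x y := by rw [(hf x).fderiv, (hf y).fderiv]; exact hHolder x y

theorem id : BoundedHolderFDeriv 1 0 β (fun x : E => x) where
  differentiable := differentiable_id
  norm_fderiv_le _ := by rw [fderiv_fun_id]; exact ContinuousLinearMap.norm_id_le
  norm_fderiv_sub_le _ _ := by simp

theorem mono {f : E → F} (hf : BoundedHolderFDeriv A B β f) {A' B' : ℝ} (hA : A ≤ A')
    (hB : B ≤ B') : BoundedHolderFDeriv A' B' β f where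
  differentiable := hf.differentiable
  norm_fderiv_le x := (hf.norm_fderiv_le x).trans hA
  norm_fderiv_sub_le x y := (hf.norm_fderiv_sub_le x y).trans <| by gcongr

theorem nonneg {f : E → F} (hf : BoundedHolderFDeriv A B β f) : 0 ≤ A :=
  (norm_nonneg _).trans (hf.norm_fderiv_le 0)

theorem norm_sub_le {f : E → F} (hf : BoundedHolderFDeriv A B β f) (x y : E) :
    ‖f x - f y‖ ≤ A * ‖x - y‖ :=
  convex_univ.norm_image_sub_le_of_norm_fderiv_le (fun z _ => hf.differentiable z)
    (fun z _ => hf.norm_fderiv_le z) (Set.mem_univ y) (Set.mem_univ x)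

theorem comp {g : F → G} {f : E → F} (hg : BoundedHolderFDeriv A₂ B₂ β g)
    (hf : BoundedHolderFDeriv A₁ B₁ β f) (hB₂ : 0 ≤ B₂) (hβ : 0 ≤ β) :
    BoundedHolderFDeriv (A₂ * A₁) (B₂ * A₁ ^ β * A₁ + A₂ * B₁) β (g ∘ f) := by
  have hderiv : ∀ x, fderiv ℝ (g ∘ f) x = (fderiv ℝ g (f x)).comp (fderiv ℝ f x) := fun x =>
    fderiv_comp x (hg.differentiable (f x)) (hf.differentiable x)
  refine ⟨hg.differentiable.comp hf.differentiable, fun x => ?_, fun x y => ?_⟩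
  · rw [hderiv]
    exact (ContinuousLinearMap.opNorm_comp_le _ _).trans
      (mul_le_mul (hg.norm_fderiv_le _) (hf.norm_fderiv_le x) (norm_nonneg _) hg.nonneg)
  set g' := fderiv ℝ g
  set f' := fderiv ℝ f
  have hsplit : (g' (f x)).comp (f' x) - (g' (f y)).comp (f' y)
      = (g' (f x) - g' (f y)).comp (f' x) + (g' (f y)).comp (f' x - f' y) := by
    rw [ContinuousLinearMap.sub_comp, ContinuousLinearMap.comp_sub]; abel
  have hHolder_f : ‖f x - f y‖ ^ β ≤ A₁ ^ β * ‖x - y‖ ^ β := by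
    rw [← mul_rpow hf.nonneg (norm_nonneg _)]
    exact rpow_le_rpow (norm_nonneg _) (hf.norm_sub_le x y) hβ
  rw [hderiv, hderiv, hsplit]
  calc ‖(g' (f x) - g' (f y)).comp (f' x) + (g' (f y)).comp (f' x - f' y)‖
      ≤ ‖g' (f x) - g' (f y)‖ * ‖f' x‖ + ‖g' (f y)‖ * ‖f' x - f' y‖ :=
        (norm_add_le _ _).trans (add_le_add (ContinuousLinearMap.opNorm_comp_le _ _)
          (ContinuousLinearMap.opNorm_comp_le _ _))
    _ ≤ B₂ * ‖f x - f y‖ ^ β * A₁ + A₂ * (B₁ * ‖x - y‖ ^ β) :=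
        add_le_add
          (mul_le_mul (hg.norm_fderiv_sub_le _ _) (hf.norm_fderiv_le x) (norm_nonneg _)
            (by positivity))
          (mul_le_mul (hg.norm_fderiv_le _) (hf.norm_fderiv_sub_le x y) (norm_nonneg _)
            hg.nonneg)
    _ ≤ B₂ * (A₁ ^ β * ‖x - y‖ ^ β) * A₁ + A₂ * (B₁ * ‖x - y‖ ^ β) := by
        gcongr
        exact hf.nonneg
    _ = (B₂ * A₁ ^ β * A₁ + A₂ * B₁) * ‖x - y‖ ^ β := by ring

theorem foldl {C β : ℝ} (hC : 1 ≤ C) (hβ : 0 ≤ β) {L : List (E → E)}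
    (hL : ∀ g ∈ L, BoundedHolderFDeriv C C β g) :
    BoundedHolderFDeriv (C ^ L.length) (L.length * C ^ ((L.length : ℝ) * (1 + β))) β
      (fun x => L.foldl (fun y g => g y) x) := by
  induction L using List.reverseRecOn with
  | nil => simpa using BoundedHolderFDeriv.id (E := E) (β := β)
  | append_singleton L g ih =>
    have hcomp := (hL g (by simp)).comp (ih fun f hf => hL f (by simp [hf])) (by linarith) hβ
    simp only [List.foldl_append, List.foldl_cons, List.foldl_nil, List.length_append,
      List.length_singleton, Nat.cast_add, Nat.cast_one, pow_succ]
    exact hcomp.mono (by rw [mul_comm]) (holderConst_succ_le hC hβ _)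

end BoundedHolderFDeriv

end

theorem stmt1_general {E : Type*} [NormedAddCommGroup E] [NormedSpace ℝ E]
    (β : ℝ) (hβ0 : 0 < β) (C : ℝ) (hC : 1 ≤ C)
    (n : ℕ) (g : Fin n → E → E)
    (Dg : Fin n → E → (E →L[ℝ] E))
    (hdiff : ∀ i x, HasFDerivAt (g i) (Dg i x) x)
    (hbound : ∀ i x, ‖Dg i x‖ ≤ C)
    (hHolder : ∀ i x y, ‖Dg i x - Dg i y‖ ≤ C * ‖x - y‖ ^ β) :
    let h : E → E := fun x => (List.ofFn g).foldl (fun (y : E) (f : E → E) => f y) x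
    (∀ x, DifferentiableAt ℝ h x) ∧
    (∀ x, ‖fderiv ℝ h x‖ ≤ C ^ n) ∧
    (∀ x y, ‖fderiv ℝ h x - fderiv ℝ h y‖ ≤
      (n : ℝ) * C ^ ((n : ℝ) * (1 + β)) * ‖x - y‖ ^ β) := by
  have hg : ∀ f ∈ List.ofFn g, BoundedHolderFDeriv C C β f := by
    simp only [List.mem_ofFn, forall_exists_index]
    rintro _ i rfl
    exact .of_hasFDerivAt (hdiff i) (hbound i) (hHolder i)
  have hh := BoundedHolderFDeriv.foldl hC hβ0.le hg
  rw [List.length_ofFn] at hh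
  exact ⟨hh.differentiable, hh.norm_fderiv_le, hh.norm_fderiv_sub_le⟩

/-- If `g_0, …, g_{n-1} : E → E` are everywhere differentiable with derivatives bounded
in operator norm by `C ≥ 1` and `β`-Hölder with constant `C`, then the composition
`h = g_{n-1} ∘ ⋯ ∘ g_0` is everywhere differentiable, `‖Dh(x)‖ ≤ C^n`, and
`Dh` is `β`-Hölder with constant `n·C^{n(1+β)}`. -/
theorem stmt1 {E : Type*} [NormedAddCommGroup E] [NormedSpace ℝ E]
    (β : ℝ) (hβ0 : 0 < β) (hβ1 : β ≤ 1) (C : ℝ) (hC : 1 ≤ C)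
    (n : ℕ) (hn : 1 ≤ n) (g : Fin n → E → E)
    (Dg : Fin n → E → (E →L[ℝ] E))
    (hdiff : ∀ i x, HasFDerivAt (g i) (Dg i x) x)
    (hbound : ∀ i x, ‖Dg i x‖ ≤ C)
    (hHolder : ∀ i x y, ‖Dg i x - Dg i y‖ ≤ C * ‖x - y‖ ^ β) :
    let h : E → E := fun x => (List.ofFn g).foldl (fun (y : E) (f : E → E) => f y) x
    (∀ x, DifferentiableAt ℝ h x) ∧
    (∀ x, ‖fderiv ℝ h x‖ ≤ C ^ n) ∧
    (∀ x y, ‖fderiv ℝ h x - fderiv ℝ h y‖ ≤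
      (n : ℝ) * C ^ ((n : ℝ) * (1 + β)) * ‖x - y‖ ^ β) :=
  stmt1_general β hβ0 C hC n g Dg hdiff hbound hHolder
end

section
/- Let n ≥ 1. In the root system of type A_n, the minimum, over simple roots α_k ∈ Π (1 ≤ k ≤ n), of the resonant codimension of Π ∖ {α_k} equals n. -/
open Finset

namespace Stmt2Aux

variable {n : ℕ}

noncomputable def e (i : Fin (n+1)) : Fin (n+1) → ℝ := Pi.single i 1

noncomputable def α (k : Fin n) : Fin (n+1) → ℝ := e k.castSucc - e k.succ

noncomputable def f (k : Fin n) : (Fin (n+1) → ℝ) →ₗ[ℝ] ℝ :=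
  ∑ i ∈ Finset.univ.filter (fun i : Fin (n+1) => (i : ℕ) ≤ (k : ℕ)), LinearMap.proj i

lemma f_apply (k : Fin n) (v : Fin (n+1) → ℝ) :
    f k v = ∑ i ∈ Finset.univ.filter (fun i : Fin (n+1) => (i:ℕ) ≤ (k:ℕ)), v i := by
  simp [f]

lemma f_e (k : Fin n) (a : Fin (n+1)) :
    f k (e a) = if (a:ℕ) ≤ (k:ℕ) then 1 else 0 := by
  rw [f_apply]
  simp [e, Pi.single_apply, Finset.sum_ite_eq' (Finset.univ.filter _) a (fun _ => (1:ℝ))]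

lemma f_root (k : Fin n) (a b : Fin (n+1)) :
    f k (e a - e b) = (if (a:ℕ) ≤ (k:ℕ) then (1:ℝ) else 0) - (if (b:ℕ) ≤ (k:ℕ) then 1 else 0) := by
  rw [map_sub, f_e, f_e]

lemma f_α (k m : Fin n) : f k (α m) = if (m:ℕ) = (k:ℕ) then 1 else 0 := by
  rw [α, f_root]
  simp only [Fin.coe_castSucc, Fin.val_succ]
  split_ifs <;> norm_num <;> omega

lemma α_inj : Function.Injective (α (n := n)) := by
  intro m l h
  have h1 : f m (α m) = f m (α l) := by rw [h]
  rw [f_α, f_α] at h1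
  simp only [if_pos rfl] at h1
  by_contra hne
  have hv : (l:ℕ) ≠ (m:ℕ) := fun hc => hne (Fin.ext hc).symm
  rw [if_neg hv] at h1
  norm_num at h1

lemma span_f_zero (k : Fin n) {v : Fin (n+1) → ℝ}
    (hv : v ∈ Submodule.span ℝ (Set.range α \ {α k})) : f k v = 0 := by
  have hle : Submodule.span ℝ (Set.range α \ {α k}) ≤ LinearMap.ker (f k) := by
    rw [Submodule.span_le]
    rintro x ⟨⟨m, rfl⟩, hx⟩
    have hm : (m:ℕ) ≠ (k:ℕ) := by
      intro hc
      exact hx (by simp [Fin.ext hc])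
    simp [LinearMap.mem_ker, f_α, hm]
  exact hle hv

lemma root_inj {i j i' j' : Fin (n+1)} (hij : i < j) (hij' : i' < j')
    (h : e i - e j = e i' - e j') : i = i' ∧ j = j' := by
  have hii' : i = i' := by
    by_contra hne
    have h1 := congrFun h i
    simp only [e, Pi.sub_apply] at h1
    rw [Pi.single_eq_same, Pi.single_eq_of_ne hij.ne, Pi.single_eq_of_ne hne] at h1
    rcases eq_or_ne i j' with h2 | h2
    · rw [h2, Pi.single_eq_same] at h1; norm_num at h1
    · rw [Pi.single_eq_of_ne h2] at h1; norm_num at h1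
  subst hii'
  refine ⟨rfl, ?_⟩
  have h2 : e j = e j' := sub_right_injective h
  have h3 := congrFun h2 j
  simp only [e] at h3
  rw [Pi.single_eq_same] at h3
  by_contra hne
  rw [Pi.single_eq_of_ne hne] at h3
  norm_num at h3

lemma telescope (a b : ℕ) (hab : a < b) (hb : b ≤ n) :
    e ⟨a, by omega⟩ - e ⟨b, by omega⟩ ∈
      Submodule.span ℝ (α '' {m : Fin n | a ≤ (m:ℕ)}) := by
  induction b with
  | zero => omega
  | succ b ih =>
    have hbn : b < n := by omega
    have hmem : α ⟨b, hbn⟩ ∈ α '' {m : Fin n | a ≤ (m:ℕ)} :=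
      ⟨⟨b, hbn⟩, Nat.lt_succ_iff.mp hab, rfl⟩
    have hα : (α ⟨b, hbn⟩ : Fin (n+1) → ℝ) = e ⟨b, by omega⟩ - e ⟨b+1, by omega⟩ := rfl
    rcases eq_or_lt_of_le (Nat.lt_succ_iff.mp hab) with h | h
    · subst h
      exact hα ▸ Submodule.subset_span hmem
    · have h1 := ih h (by omega)
      have h2 : (e ⟨a, by omega⟩ - e ⟨b+1, by omega⟩ : Fin (n+1) → ℝ)
          = (e ⟨a, by omega⟩ - e ⟨b, by omega⟩) + (e ⟨b, by omega⟩ - e ⟨b+1, by omega⟩) :=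
        (sub_add_sub_cancel _ _ _).symm
      rw [h2, ← hα]
      exact Submodule.add_mem _ h1 (Submodule.subset_span hmem)

def S (k : Fin n) : Set (Fin (n+1) → ℝ) :=
  {v | (v ∈ {v : Fin (n+1) → ℝ | ∃ i j : Fin (n+1), i < j ∧ v = e i - e j}) ∧
    v ∉ Submodule.span ℝ (Set.range α \ {α k})}

lemma S_finite (k : Fin n) : (S k).Finite := by
  apply Set.Finite.subset (Set.finite_range (fun p : Fin (n+1) × Fin (n+1) => e p.1 - e p.2))
  rintro v ⟨⟨i, j, _, rfl⟩, -⟩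
  exact ⟨(i, j), rfl⟩

lemma lower (k : Fin n) : n ≤ (S k).ncard := by
  set g : Fin n → (Fin (n+1) → ℝ) := fun m =>
    e ⟨min (m:ℕ) (k:ℕ), by omega⟩ - e ⟨max ((m:ℕ)+1) ((k:ℕ)+1), by omega⟩ with hg
  have hlt : ∀ m : Fin n, (⟨min (m:ℕ) (k:ℕ), by omega⟩ : Fin (n+1))
      < ⟨max ((m:ℕ)+1) ((k:ℕ)+1), by omega⟩ := by
    intro m
    rw [Fin.mk_lt_mk]
    omega
  have hginj : Function.Injective g := by
    intro m m' h
    obtain ⟨hi, hj⟩ := root_inj (hlt m) (hlt m') h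
    rw [Fin.mk.injEq] at hi hj
    exact Fin.ext (by omega)
  have hrange : Set.range g ⊆ S k := by
    rintro v ⟨m, rfl⟩
    refine ⟨⟨_, _, hlt m, rfl⟩, fun hsp => ?_⟩
    have h0 := span_f_zero k hsp
    rw [f_root] at h0
    rw [if_pos (by simp), if_neg (by simp)] at h0
    norm_num at h0
  calc n = Nat.card (Fin n) := by simp
    _ = Nat.card (Set.range g) := (Nat.card_range_of_injective hginj).symm
    _ = (Set.range g).ncard := Nat.card_coe_set_eq _
    _ ≤ (S k).ncard := Set.ncard_le_ncard hrange (S_finite k)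

lemma upper (hn : 1 ≤ n) : (S (⟨0, hn⟩ : Fin n)).ncard ≤ n := by
  set h : Fin n → (Fin (n+1) → ℝ) := fun j => e 0 - e j.succ with hh
  have hsub : S (⟨0, hn⟩ : Fin n) ⊆ Set.range h := by
    rintro v ⟨⟨i, j, hij, rfl⟩, hv⟩
    have hi : i = 0 := by
      by_contra h0
      apply hv
      have hi1 : 1 ≤ (i:ℕ) := Nat.one_le_iff_ne_zero.mpr (fun hc => h0 (Fin.ext hc))
      have ht := telescope (i:ℕ) (j:ℕ) hij (Nat.lt_succ_iff.mp j.isLt)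
      simp only [Fin.eta] at ht
      refine Submodule.span_mono ?_ ht
      rintro x ⟨m, hm, rfl⟩
      have hm' : (i:ℕ) ≤ (m:ℕ) := hm
      refine ⟨⟨m, rfl⟩, fun hc => ?_⟩
      have hmk := α_inj (Set.mem_singleton_iff.mp hc)
      have hm0 : (m:ℕ) = 0 := by rw [hmk]
      omega
    subst hi
    obtain ⟨j', rfl⟩ := Fin.exists_succ_eq.mpr (Fin.pos_iff_ne_zero.mp hij)
    exact ⟨j', rfl⟩
  calc (S (⟨0, hn⟩ : Fin n)).ncard ≤ (Set.range h).ncard :=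
        Set.ncard_le_ncard hsub (Set.finite_range h)
    _ = (h '' Set.univ).ncard := by rw [Set.image_univ]
    _ ≤ (Set.univ : Set (Fin n)).ncard := Set.ncard_image_le Set.finite_univ
    _ = n := by simp [Set.ncard_univ]

theorem main (n : ℕ) (hn : 1 ≤ n) :
    (⨅ k : Fin n, (S k).ncard) = n := by
  haveI : Nonempty (Fin n) := ⟨⟨0, hn⟩⟩
  apply le_antisymm
  · exact (ciInf_le (OrderBot.bddBelow _) (⟨0, hn⟩ : Fin n)).trans (upper hn)
  · exact le_ciInf fun k => lower k

end Stmt2Aux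

/-- In the root system of type `A_n` (`n ≥ 1`), the minimum over simple roots `α_k` of the
resonant codimension of `Π \ {α_k}` equals `n`. -/
theorem stmt2 (n : ℕ) (hn : 1 ≤ n) :
    let e : Fin (n + 1) → (Fin (n + 1) → ℝ) := fun i => Pi.single i 1
    let Sp : Set (Fin (n + 1) → ℝ) :=
      {v | ∃ i j : Fin (n + 1), i < j ∧ v = e i - e j}
    let α : Fin n → (Fin (n + 1) → ℝ) := fun k => e k.castSucc - e k.succ
    let rc : Set (Fin (n + 1) → ℝ) → ℕ := fun Pi' =>
      Set.ncard {v | v ∈ Sp ∧ v ∉ Submodule.span ℝ Pi'}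
    (⨅ k : Fin n, rc (Set.range α \ {α k})) = n := by
  intro e Sp α rc
  exact Stmt2Aux.main n hn
end

section
/- Let n ≥ 2. In the root system of type A_n, the minimum, over unordered pairs {α_i, α_j} of distinct simple roots in Π, of the resonant codimension of Π ∖ {α_i, α_j} equals 2n − 1. -/
/-!
The positive root `e_a - e_b` (`a < b`) is `α_a + ⋯ + α_{b-1}`, so it lies in the span of a set
of simple roots if all of these do; if some `α_k` with `a ≤ k < b` is missing, the
fundamental coweight dual to `α_k` vanishes on the span but not on `e_a - e_b`. Hence removing
`α_i` and `α_j` (`i < j`) leaves out exactly the roots with `a ≤ k < b` for `k ∈ {i, j}`, and by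
inclusion–exclusion there are `(i + 1)(n - i) + (j + 1)(n - j) - (i + 1)(n - j)` of them
(indices from `0`), which is at least `2n - 1`, with equality for `(i, j) = (0, 1)`.
-/

open Finset

namespace TypeA

variable (R : Type*) [CommRing R] {n : ℕ}

def root (a b : Fin (n + 1)) : Fin (n + 1) → R := Pi.single a 1 - Pi.single b 1

def simpleRoot (k : Fin n) : Fin (n + 1) → R := root R k.castSucc k.succ

def fundCoweight (k : Fin n) : (Fin (n + 1) → R) →ₗ[R] R :=
  ∑ t ∈ Iic k.castSucc, LinearMap.proj t

def positiveRoots (n : ℕ) : Set (Fin (n + 1) → R) := {v | ∃ a b, a < b ∧ v = root R a b}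

def involving (k : Fin n) : Finset (Fin (n + 1) × Fin (n + 1)) :=
  Iic k.castSucc ×ˢ Ici k.succ

variable {R}

lemma fundCoweight_single (k : Fin n) (a : Fin (n + 1)) :
    fundCoweight R k (Pi.single a 1) = if a ≤ k.castSucc then 1 else 0 := by
  simp [fundCoweight, Pi.single_apply]

lemma fundCoweight_root (k : Fin n) (a b : Fin (n + 1)) :
    fundCoweight R k (root R a b) =
      (if a ≤ k.castSucc then 1 else 0) - (if b ≤ k.castSucc then 1 else 0) := by
  simp only [root, map_sub, fundCoweight_single]

lemma fundCoweight_simpleRoot (k l : Fin n) :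
    fundCoweight R k (simpleRoot R l) = if l = k then 1 else 0 := by
  rw [simpleRoot, fundCoweight_root]
  rcases lt_trichotomy l k with h | rfl | h
  · simp [h.le, h.ne, Fin.succ_le_castSucc_iff.mpr h]
  · simp
  · simp [h.ne', (Fin.castSucc_lt_castSucc_iff.mpr h).not_ge,
      not_le.mpr (Fin.castSucc_lt_succ_iff.mpr h.le)]

lemma root_mem_span_of_forall {K : Set (Fin n)} {a b : Fin (n + 1)} (hab : a ≤ b)
    (hK : ∀ k, (a, b) ∈ involving k → k ∈ K) :
    root R a b ∈ Submodule.span R (simpleRoot R '' K) := by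
  induction b using Fin.induction with
  | zero => simp [le_antisymm hab (Fin.zero_le a), root]
  | succ k ih =>
    rcases hab.eq_or_lt with rfl | hlt
    · simp [root]
    have hak : a ≤ k.castSucc := Fin.le_castSucc_iff.mpr hlt
    rw [root, ← sub_add_sub_cancel _ (Pi.single k.castSucc 1)]
    refine Submodule.add_mem _ (ih hak fun l hl => hK l ?_) ?_
    · simp only [involving, mem_product, mem_Iic, mem_Ici] at hl ⊢
      exact ⟨hl.1, hl.2.trans (Fin.castSucc_le_succ k)⟩
    · exact Submodule.subset_span ⟨k, hK k (by simp [involving, hak]), rfl⟩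

variable [Nontrivial R]

lemma root_notMem_span_of_mem_involving {K : Set (Fin n)} {a b : Fin (n + 1)} {k : Fin n}
    (hab : (a, b) ∈ involving k) (hk : k ∉ K) :
    root R a b ∉ Submodule.span R (simpleRoot R '' K) := by
  simp only [involving, mem_product, mem_Iic, mem_Ici] at hab
  have hvanish : Submodule.span R (simpleRoot R '' K) ≤ LinearMap.ker (fundCoweight R k) := by
    rw [Submodule.span_le]
    rintro _ ⟨l, hl, rfl⟩
    simp [fundCoweight_simpleRoot, ne_of_mem_of_not_mem hl hk]
  intro hmem
  have := LinearMap.mem_ker.mp (hvanish hmem)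
  have hb : ¬b ≤ k.castSucc := not_le.mpr (Fin.castSucc_lt_succ.trans_le hab.2)
  simp [fundCoweight_root, hab.1, hb] at this

lemma root_injOn : Set.InjOn (fun p : Fin (n + 1) × Fin (n + 1) => root R p.1 p.2)
    {p | p.1 < p.2} := by
  rintro ⟨a, b⟩ (hab : a < b) ⟨c, d⟩ (hcd : c < d) h
  have ha := congrFun h a
  have hb := congrFun h b
  simp only [root, Pi.sub_apply, Pi.single_apply, if_neg hab.ne, if_neg hab.ne'] at ha hb
  split_ifs at ha hb <;> simp_all [lt_asymm hcd]

lemma simpleRoot_injective : Function.Injective (simpleRoot R (n := n)) := by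
  intro k l h
  have := congrArg (fundCoweight R k) h
  simp only [fundCoweight_simpleRoot] at this
  by_contra hkl
  simp [Ne.symm hkl] at this

lemma lt_of_mem_involving {a b : Fin (n + 1)} {k : Fin n} (h : (a, b) ∈ involving k) : a < b := by
  simp only [involving, mem_product, mem_Iic, mem_Ici] at h
  exact h.1.trans_lt (Fin.castSucc_lt_succ.trans_le h.2)

lemma roots_notMem_span_eq_image (i j : Fin n) :
    {v | v ∈ positiveRoots R n ∧
        v ∉ Submodule.span R (Set.range (simpleRoot R) \ {simpleRoot R i, simpleRoot R j})} =
      (fun p : Fin (n + 1) × Fin (n + 1) => root R p.1 p.2) '' ↑(involving i ∪ involving j) := by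
  rw [← Set.image_pair, Set.range_sdiff_image simpleRoot_injective]
  ext v
  simp only [Set.mem_ofPred_eq, coe_union, Set.mem_image, Set.mem_union, mem_coe]
  constructor
  · rintro ⟨⟨a, b, hab, rfl⟩, hv⟩
    obtain ⟨k, hk, hkij⟩ : ∃ k, (a, b) ∈ involving k ∧ k ∉ ({i, j} : Set (Fin n))ᶜ := by
      by_contra! h
      exact hv (root_mem_span_of_forall hab.le h)
    rw [Set.notMem_compl_iff, Set.mem_insert_iff, Set.mem_singleton_iff] at hkij
    rcases hkij with rfl | rfl
    exacts [⟨(a, b), .inl hk, rfl⟩, ⟨(a, b), .inr hk, rfl⟩]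
  · rintro ⟨⟨a, b⟩, hab, rfl⟩
    obtain ⟨k, hk, hab⟩ : ∃ k ∈ ({i, j} : Set (Fin n)), (a, b) ∈ involving k := by
      rcases hab with h | h
      exacts [⟨i, .inl rfl, h⟩, ⟨j, .inr rfl, h⟩]
    exact ⟨⟨a, b, lt_of_mem_involving hab, rfl⟩,
      root_notMem_span_of_mem_involving hab (Set.notMem_compl_iff.mpr hk)⟩

lemma ncard_roots_notMem_span (i j : Fin n) :
    {v | v ∈ positiveRoots R n ∧
        v ∉ Submodule.span R (Set.range (simpleRoot R) \ {simpleRoot R i, simpleRoot R j})}.ncard =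
      #(involving i ∪ involving j) := by
  rw [roots_notMem_span_eq_image, Set.InjOn.ncard_image, Set.ncard_coe_finset]
  exact root_injOn.mono fun p hp => by
    rcases mem_union.mp hp with h | h <;> exact lt_of_mem_involving h

lemma card_involving_union {i j : Fin n} (hij : i ≤ j) :
    #(involving i ∪ involving j) + (i + 1) * (n - j) = (i + 1) * (n - i) + (j + 1) * (n - j) := by
  have hinter : involving i ∩ involving j = Iic i.castSucc ×ˢ Ici j.succ := by
    ext ⟨a, b⟩
    simp only [involving, mem_inter, mem_product, mem_Iic, mem_Ici, Fin.le_def] at hij ⊢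
    simp only [Fin.val_castSucc, Fin.val_succ]
    omega
  have hcard (k : Fin n) : #(involving k) = (k + 1) * (n - k) := by
    simp [involving, card_product]
  rw [← hcard, ← hcard, ← card_union_add_card_inter, hinter]
  simp [card_product]

lemma two_mul_sub_one_le_card_involving_union {i j : Fin n} (hij : i ≠ j) :
    2 * n - 1 ≤ #(involving i ∪ involving j) := by
  wlog hlt : i < j generalizing i j
  · rw [union_comm]
    exact this hij.symm (hij.lt_or_gt.resolve_left hlt)
  have hcard := card_involving_union hlt.le
  have hij : (i : ℕ) < j := hlt
  have hjn : (j : ℕ) < n := j.isLt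
  zify [hij.le.trans hjn.le, hjn.le, (by omega : 1 ≤ 2 * n)] at hcard ⊢
  nlinarith [mul_nonneg (by positivity : (0 : ℤ) ≤ i) (by omega : (0 : ℤ) ≤ n - i - 2),
    mul_nonneg (by omega : (0 : ℤ) ≤ j - i - 1) (by omega : (0 : ℤ) ≤ n - j - 1)]

lemma card_involving_zero_union_one (hn : 2 ≤ n) :
    #(involving (⟨0, by omega⟩ : Fin n) ∪ involving ⟨1, by omega⟩) = 2 * n - 1 := by
  have := card_involving_union (n := n) (i := ⟨0, by omega⟩) (j := ⟨1, by omega⟩) (by simp)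
  simp at this
  omega

end TypeA

/-- In the root system of type `A_n` (`n ≥ 2`), the minimum over unordered pairs of distinct
simple roots `{α_i, α_j}` of the resonant codimension of `Π \ {α_i, α_j}` equals `2n - 1`. -/
theorem stmt3 (n : ℕ) (hn : 2 ≤ n) :
    let e : Fin (n + 1) → (Fin (n + 1) → ℝ) := fun i => Pi.single i 1
    let Sp : Set (Fin (n + 1) → ℝ) :=
      {v | ∃ i j : Fin (n + 1), i < j ∧ v = e i - e j}
    let α : Fin n → (Fin (n + 1) → ℝ) := fun k => e k.castSucc - e k.succ
    let rc : Set (Fin (n + 1) → ℝ) → ℕ := fun Pi' =>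
      Set.ncard {v | v ∈ Sp ∧ v ∉ Submodule.span ℝ Pi'}
    (⨅ p : {p : Fin n × Fin n // p.1 ≠ p.2},
      rc (Set.range α \ {α p.val.1, α p.val.2})) = 2 * n - 1 := by
  intro e Sp α rc
  have hrc (p : {p : Fin n × Fin n // p.1 ≠ p.2}) :
      rc (Set.range α \ {α p.val.1, α p.val.2}) =
        #(TypeA.involving p.val.1 ∪ TypeA.involving p.val.2) :=
    TypeA.ncard_roots_notMem_span (R := ℝ) p.val.1 p.val.2
  let p₀ : {p : Fin n × Fin n // p.1 ≠ p.2} := ⟨(⟨0, by omega⟩, ⟨1, by omega⟩), by simp⟩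
  have : Nonempty {p : Fin n × Fin n // p.1 ≠ p.2} := ⟨p₀⟩
  refine le_antisymm ((ciInf_le (OrderBot.bddBelow _) p₀).trans_eq ?_) (le_ciInf fun p => ?_)
  · rw [hrc]
    exact TypeA.card_involving_zero_union_one hn
  · rw [hrc]
    exact TypeA.two_mul_sub_one_le_card_involving_union p.property
end

section
/- Let n ≥ 2. In the root system of type B_n, the minimum, over simple roots α_k ∈ Π (1 ≤ k ≤ n), of the resonant codimension of Π ∖ {α_k} equals 2n − 1. -/
/-! The partial-sum functional `v ↦ ∑_{i ≤ k} v i` vanishes on every simple root except `α_k`,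
so no positive root on which it is nonzero lies in the span of `Π ∖ {α_k}`. The `2n - 1` roots
`e_i` (`i ≤ k`), `e_k - e_i` (`i > k`) and `e_0 + e_j` (`j > 0`) are of this kind. For `k = 0`
there are no others: `Π ∖ {α_0}` spans `e_1, …, e_{n-1}` (telescoping `α_j + ⋯ + α_{n-1} = e_j`),
hence every positive root not involving `e_0`. -/

open Set Submodule

section ResonantCodim

variable {V ι : Type*} [AddCommGroup V] [Module ℝ V]

noncomputable def resonantCodim (roots P : Set V) : ℕ :=
  {β | β ∈ roots ∧ β ∉ span ℝ P}.ncard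

theorem card_le_resonantCodim {roots P : Set V} (hroots : roots.Finite) {f : ι → V}
    (hf : Function.Injective f) (hf_roots : ∀ i, f i ∈ roots) (hf_span : ∀ i, f i ∉ span ℝ P) :
    Nat.card ι ≤ resonantCodim roots P := by
  rw [← ncard_range_of_injective hf]
  exact ncard_le_ncard (by rintro _ ⟨i, rfl⟩; exact ⟨hf_roots i, hf_span i⟩)
    (hroots.subset fun _ hβ => hβ.1)

theorem resonantCodim_le_card [Finite ι] {roots P : Set V} {f : ι → V}
    (h : ∀ β ∈ roots, β ∉ span ℝ P → β ∈ range f) :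
    resonantCodim roots P ≤ Nat.card ι :=
  calc resonantCodim roots P ≤ (range f).ncard :=
        ncard_le_ncard (fun β hβ => h β hβ.1 hβ.2) (finite_range f)
    _ ≤ Nat.card ι := by rw [← Nat.card_coe_set_eq]; exact Finite.card_range_le f

theorem not_mem_span_of_forall_eq_zero {P : Set V} (φ : V →ₗ[ℝ] ℝ) (hP : ∀ p ∈ P, φ p = 0)
    {v : V} (hv : φ v ≠ 0) : v ∉ span ℝ P :=
  fun h => hv (span_le (p := LinearMap.ker φ) |>.mpr hP h)

end ResonantCodim

namespace TypeB

variable {n m : ℕ}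

theorem single_one_injective : Function.Injective fun i : Fin n => (Pi.single i 1 : Fin n → ℝ) :=
  fun i j h => by simpa [Pi.single_apply, eq_comm] using congrFun h i

def positiveRoots (n : ℕ) : Set (Fin n → ℝ) :=
  {v | (∃ i j : Fin n, i < j ∧ (v = Pi.single i 1 - Pi.single j 1 ∨
    v = Pi.single i 1 + Pi.single j 1)) ∨ ∃ i : Fin n, v = Pi.single i 1}

noncomputable def simpleRoot (n : ℕ) (k : Fin n) : Fin n → ℝ :=
  if h : (k : ℕ) + 1 < n then Pi.single k 1 - Pi.single ⟨(k : ℕ) + 1, h⟩ 1 else Pi.single k 1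

def simpleRootsExcept (n : ℕ) (k : Fin n) : Set (Fin n → ℝ) :=
  range (simpleRoot n) \ {simpleRoot n k}

theorem positiveRoots_finite (n : ℕ) : (positiveRoots n).Finite := by
  let e : Fin n → Fin n → ℝ := fun i => Pi.single i 1
  refine (((finite_range fun p : Fin n × Fin n => e p.1 - e p.2).union
    (finite_range fun p : Fin n × Fin n => e p.1 + e p.2)).union (finite_range e)).subset ?_
  rintro v (⟨i, j, -, rfl | rfl⟩ | ⟨i, rfl⟩)
  · exact Or.inl (Or.inl ⟨(i, j), rfl⟩)
  · exact Or.inl (Or.inr ⟨(i, j), rfl⟩)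
  · exact Or.inr ⟨i, rfl⟩

theorem simpleRoot_castSucc (i : Fin m) :
    simpleRoot (m + 1) i.castSucc = Pi.single i.castSucc 1 - Pi.single i.succ 1 := by
  rw [simpleRoot, dif_pos (by simp)]
  rfl

theorem simpleRoot_last : simpleRoot (m + 1) (Fin.last m) = Pi.single (Fin.last m) 1 := by
  rw [simpleRoot, dif_neg (by simp)]

theorem simpleRoot_apply_self (k : Fin n) : simpleRoot n k k = 1 := by
  unfold simpleRoot
  split_ifs <;> simp [Fin.ext_iff]

theorem simpleRoot_apply_of_lt {i k : Fin n} (h : i < k) : simpleRoot n k i = 0 := by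
  have h' : (i : ℕ) < k := h
  unfold simpleRoot
  split_ifs <;> simp [Fin.ext_iff, h'.ne, show (i : ℕ) ≠ k + 1 by omega]

theorem simpleRoot_injective : Function.Injective (simpleRoot n) := by
  intro j k h
  by_contra hne
  rcases lt_or_gt_of_ne hne with hjk | hkj
  · simpa [← h, simpleRoot_apply_self] using simpleRoot_apply_of_lt hjk
  · simpa [h, simpleRoot_apply_self] using simpleRoot_apply_of_lt hkj

noncomputable def partialSum (k : Fin n) : (Fin n → ℝ) →ₗ[ℝ] ℝ :=
  ∑ i ∈ Finset.Iic k, LinearMap.proj i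

theorem partialSum_single (k i : Fin n) :
    partialSum k (Pi.single i 1) = if i ≤ k then 1 else 0 := by
  simp [partialSum, Pi.single_apply]

theorem partialSum_simpleRoot_of_ne {j k : Fin n} (h : j ≠ k) :
    partialSum k (simpleRoot n j) = 0 := by
  have h' : (j : ℕ) ≠ k := Fin.val_ne_of_ne h
  have hk := k.isLt
  unfold simpleRoot
  split_ifs
  all_goals simp only [map_sub, partialSum_single, Fin.le_def]
  all_goals split_ifs <;> first | omega | norm_num

theorem partialSum_eq_zero_on_simpleRootsExcept (k : Fin n) :
    ∀ p ∈ simpleRootsExcept n k, partialSum k p = 0 := by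
  rintro _ ⟨⟨j, rfl⟩, hj⟩
  exact partialSum_simpleRoot_of_ne (by rintro rfl; exact hj rfl)

theorem partialSum_last_single (i : Fin (m + 1)) :
    partialSum (Fin.last m) (Pi.single i 1) = 1 := by
  simp [partialSum_single, Fin.le_last]

noncomputable def transverseRoot (k : Fin (m + 1)) : Fin (m + 1) ⊕ Fin m → Fin (m + 1) → ℝ :=
  Sum.elim (fun i => if i ≤ k then Pi.single i 1 else Pi.single k 1 - Pi.single i 1)
    (fun j => Pi.single 0 1 + Pi.single j.succ 1)

theorem transverseRoot_mem_positiveRoots (k : Fin (m + 1)) (x : Fin (m + 1) ⊕ Fin m) :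
    transverseRoot k x ∈ positiveRoots (m + 1) := by
  rcases x with i | j
  · by_cases hik : i ≤ k
    · simp only [transverseRoot, Sum.elim_inl, if_pos hik]
      exact Or.inr ⟨i, rfl⟩
    · simp only [transverseRoot, Sum.elim_inl, if_neg hik]
      exact Or.inl ⟨k, i, not_le.mp hik, Or.inl rfl⟩
  · exact Or.inl ⟨0, j.succ, Fin.succ_pos j, Or.inr rfl⟩

theorem partialSum_transverseRoot_ne_zero (k : Fin (m + 1)) (x : Fin (m + 1) ⊕ Fin m) :
    partialSum k (transverseRoot k x) ≠ 0 := by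
  rcases x with i | j
  · by_cases hik : i ≤ k <;> simp [transverseRoot, hik, partialSum_single]
  · by_cases hjk : j.succ ≤ k <;> simp [transverseRoot, hjk, partialSum_single]

theorem partialSum_last_transverseRoot (k : Fin (m + 1)) (x : Fin (m + 1) ⊕ Fin m) :
    partialSum (Fin.last m) (transverseRoot k x) =
      Sum.elim (fun i => if i ≤ k then 1 else 0) (fun _ => 2) x := by
  rcases x with i | j
  · by_cases hik : i ≤ k <;> simp [transverseRoot, hik, partialSum_last_single]
  · simp only [transverseRoot, Sum.elim_inr, map_add, partialSum_last_single]
    norm_num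

theorem transverseRoot_injective (k : Fin (m + 1)) : Function.Injective (transverseRoot k) := by
  intro x y h
  have hsum := (partialSum_last_transverseRoot k x).symm.trans
    ((congrArg _ h).trans (partialSum_last_transverseRoot k y))
  rcases x with i | j <;> rcases y with i' | j'
  · by_cases hik : i ≤ k <;> by_cases hik' : i' ≤ k <;>
      simp only [transverseRoot, Sum.elim_inl, hik, hik', if_true, if_false] at h hsum
    · rw [single_one_injective h]
    · norm_num at hsum
    · norm_num at hsum
    · rw [single_one_injective (sub_right_injective h)]
  · by_cases hik : i ≤ k <;> simp [hik] at hsum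
  · by_cases hik' : i' ≤ k <;> simp [hik'] at hsum
  · rw [Fin.succ_injective _ (single_one_injective (add_right_injective _ h))]

theorem single_mem_span_simpleRootsExcept_zero {j : Fin (m + 1)} (hj : j ≠ 0) :
    Pi.single j 1 ∈ span ℝ (simpleRootsExcept (m + 1) 0) := by
  have mem : ∀ {i : Fin (m + 1)}, i ≠ 0 →
      simpleRoot (m + 1) i ∈ span ℝ (simpleRootsExcept (m + 1) 0) :=
    fun hi => subset_span ⟨mem_range_self _, simpleRoot_injective.ne hi⟩
  induction j using Fin.reverseInduction with
  | last => simpa [simpleRoot_last] using mem hj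
  | cast i ih =>
    have hstep : (Pi.single i.castSucc 1 : Fin (m + 1) → ℝ) =
        simpleRoot (m + 1) i.castSucc + Pi.single i.succ 1 := by
      rw [simpleRoot_castSucc, sub_add_cancel]
    rw [hstep]
    exact add_mem (mem hj) (ih (Fin.succ_ne_zero i))

theorem mem_range_transverseRoot_zero {v : Fin (m + 1) → ℝ} (hv : v ∈ positiveRoots (m + 1))
    (hspan : v ∉ span ℝ (simpleRootsExcept (m + 1) 0)) : v ∈ range (transverseRoot 0) := by
  have single_mem := @single_mem_span_simpleRootsExcept_zero m
  rcases hv with ⟨i, j, hij, rfl | rfl⟩ | ⟨i, rfl⟩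
  all_goals obtain rfl | hi := eq_or_ne i 0
  · exact ⟨.inl j, by simp [transverseRoot, hij.ne']⟩
  · exact absurd (sub_mem (single_mem hi) (single_mem ((Fin.zero_le i).trans_lt hij).ne')) hspan
  · obtain ⟨j, rfl⟩ := Fin.exists_succ_eq_of_ne_zero hij.ne'
    exact ⟨.inr j, rfl⟩
  · exact absurd (add_mem (single_mem hi) (single_mem ((Fin.zero_le i).trans_lt hij).ne')) hspan
  · exact ⟨.inl 0, by simp [transverseRoot]⟩
  · exact absurd (single_mem hi) hspan

theorem card_transverseRoot_domain : Nat.card (Fin (m + 1) ⊕ Fin m) = 2 * m + 1 := by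
  rw [Nat.card_sum, Nat.card_fin, Nat.card_fin]
  ring

theorem le_resonantCodim_simpleRootsExcept (k : Fin (m + 1)) :
    2 * m + 1 ≤ resonantCodim (positiveRoots (m + 1)) (simpleRootsExcept (m + 1) k) := by
  have h := card_le_resonantCodim (positiveRoots_finite (m + 1)) (transverseRoot_injective k)
    (transverseRoot_mem_positiveRoots k) fun x => not_mem_span_of_forall_eq_zero (partialSum k)
      (partialSum_eq_zero_on_simpleRootsExcept k) (partialSum_transverseRoot_ne_zero k x)
  rwa [card_transverseRoot_domain] at h

theorem resonantCodim_simpleRootsExcept_zero_le :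
    resonantCodim (positiveRoots (m + 1)) (simpleRootsExcept (m + 1) 0) ≤ 2 * m + 1 := by
  have h := resonantCodim_le_card fun _ => mem_range_transverseRoot_zero (m := m)
  rwa [card_transverseRoot_domain] at h

end TypeB

open TypeB in
theorem stmt4_general (n : ℕ) :
    let e : Fin n → (Fin n → ℝ) := fun i => Pi.single i 1
    let Sp : Set (Fin n → ℝ) :=
      {v | (∃ i j : Fin n, i < j ∧ (v = e i - e j ∨ v = e i + e j)) ∨ ∃ i : Fin n, v = e i}
    let α : Fin n → (Fin n → ℝ) := fun k =>
      if h : (k : ℕ) + 1 < n then e k - e ⟨(k : ℕ) + 1, h⟩ else e k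
    let rc : Set (Fin n → ℝ) → ℕ := fun Pi' =>
      Set.ncard {v | v ∈ Sp ∧ v ∉ Submodule.span ℝ Pi'}
    (⨅ k : Fin n, rc (Set.range α \ {α k})) = 2 * n - 1 := by
  intros
  cases n with
  | zero => simp -- `⨅` over `Fin 0` is `0`, and so is `2 * 0 - 1` in `ℕ`.
  | succ m =>
    show (⨅ k, resonantCodim (positiveRoots (m + 1)) (simpleRootsExcept (m + 1) k)) =
      2 * (m + 1) - 1
    rw [show 2 * (m + 1) - 1 = 2 * m + 1 by omega]
    exact le_antisymm
      ((ciInf_le (OrderBot.bddBelow _) 0).trans resonantCodim_simpleRootsExcept_zero_le)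
      (le_ciInf le_resonantCodim_simpleRootsExcept)

/-- In the root system of type `B_n` (`n ≥ 2`), the minimum over simple roots `α_k` of the
resonant codimension of `Π \ {α_k}` equals `2n - 1`. -/
theorem stmt4 (n : ℕ) (hn : 2 ≤ n) :
    let e : Fin n → (Fin n → ℝ) := fun i => Pi.single i 1
    let Sp : Set (Fin n → ℝ) :=
      {v | (∃ i j : Fin n, i < j ∧ (v = e i - e j ∨ v = e i + e j)) ∨ ∃ i : Fin n, v = e i}
    let α : Fin n → (Fin n → ℝ) := fun k =>
      if h : (k : ℕ) + 1 < n then e k - e ⟨(k : ℕ) + 1, h⟩ else e k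
    let rc : Set (Fin n → ℝ) → ℕ := fun Pi' =>
      Set.ncard {v | v ∈ Sp ∧ v ∉ Submodule.span ℝ Pi'}
    (⨅ k : Fin n, rc (Set.range α \ {α k})) = 2 * n - 1 :=
  stmt4_general n
end

section
/- Let n ≥ 2. In the (non-reduced) root system of type BC_n, the minimum, over simple roots α_k ∈ Π (1 ≤ k ≤ n), of the coarse resonant codimension of Π ∖ {α_k} equals 2n − 1. -/
/-!
Expanding in the basis of simple roots, a root lies in the span of `Π \ {α_k}` exactly when its
`α_k`-coefficient `∑_{i ≤ k} v_i` vanishes. For every `k` the `2n - 1` pairwise non-proportional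
roots `e_j` (`j ≤ k`), `e_k - e_j` (`j > k`) and `e_j + e_k` (`j ≠ k`) have nonzero coefficient, so
every codimension is at least `2n - 1`. For `k = 0` the span is the hyperplane `v_0 = 0`, and these
roots together with `2e_0`, which spans the same ray as `e_0`, are all roots leaving it.
-/

open Set Submodule

section PosRay

variable {M : Type*} [AddCommGroup M] [Module ℝ M]

def posRay (v : M) : Set M := {w | ∃ c : ℝ, 0 < c ∧ w = c • v}

lemma mem_posRay_self (v : M) : v ∈ posRay v := ⟨1, one_pos, (one_smul ℝ v).symm⟩

lemma posRay_smul {c : ℝ} (hc : 0 < c) (v : M) : posRay (c • v) = posRay v := by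
  ext w
  constructor
  · rintro ⟨d, hd, rfl⟩
    exact ⟨d * c, mul_pos hd hc, (mul_smul d c v).symm⟩
  · rintro ⟨d, hd, rfl⟩
    exact ⟨d / c, div_pos hd hc, by rw [smul_smul, div_mul_cancel₀ _ hc.ne']⟩

def resonantRays (Φ P : Set M) : Set (Set M) :=
  {R | ∃ v, (v ∈ Φ ∧ v ∉ span ℝ P) ∧ R = posRay v}

noncomputable def coarseResonantCodim (Φ P : Set M) : ℕ := (resonantRays Φ P).ncard

lemma posRay_mem_resonantRays {Φ P : Set M} {v : M} (hΦ : v ∈ Φ) (hP : v ∉ span ℝ P) :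
    posRay v ∈ resonantRays Φ P :=
  ⟨v, ⟨hΦ, hP⟩, rfl⟩

lemma resonantRays_finite {Φ : Set M} (hΦ : Φ.Finite) (P : Set M) :
    (resonantRays Φ P).Finite :=
  (hΦ.image posRay).subset (by rintro _ ⟨v, ⟨hv, -⟩, rfl⟩; exact mem_image_of_mem _ hv)

end PosRay

lemma eq_of_posRay_eq {ι : Type*} {v w : ι → ℝ} (hv : ∀ x, v x = -1 ∨ v x = 0 ∨ v x = 1)
    (hw : ∃ x, w x = 1) (h : posRay v = posRay w) : v = w := by
  obtain ⟨c, hc, rfl⟩ : v ∈ posRay w := h ▸ mem_posRay_self v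
  obtain ⟨x, hx⟩ := hw
  have hc1 : c = 1 := by
    have := hv x
    simp only [Pi.smul_apply, hx, smul_eq_mul, mul_one] at this
    rcases this with h | h | h <;> linarith
  rw [hc1, one_smul]

namespace BC

variable {n : ℕ}

def positiveRoots (n : ℕ) : Set (Fin n → ℝ) :=
  {v | (∃ i j : Fin n, i < j ∧ (v = Pi.single i 1 - Pi.single j 1 ∨
      v = Pi.single i 1 + Pi.single j 1)) ∨
    (∃ i : Fin n, v = Pi.single i 1) ∨ ∃ i : Fin n, v = (2 : ℝ) • Pi.single i 1}

def simpleRoot (n : ℕ) (k : Fin n) : Fin n → ℝ :=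
  if h : (k : ℕ) + 1 < n then Pi.single k 1 - Pi.single ⟨k + 1, h⟩ 1 else Pi.single k 1

lemma positiveRoots_finite : (positiveRoots n).Finite := by
  let e : Fin n → Fin n → ℝ := fun i => Pi.single i 1
  refine (((finite_range fun p : Fin n × Fin n => e p.1 - e p.2).union
    (finite_range fun p : Fin n × Fin n => e p.1 + e p.2)).union
    ((finite_range e).union (finite_range fun i => (2 : ℝ) • e i))).subset ?_
  rintro v (⟨i, j, -, rfl | rfl⟩ | ⟨i, rfl⟩ | ⟨i, rfl⟩)
  · exact mem_union_left _ (mem_union_left _ ⟨(i, j), rfl⟩)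
  · exact mem_union_left _ (mem_union_right _ ⟨(i, j), rfl⟩)
  · exact mem_union_right _ (mem_union_left _ ⟨i, rfl⟩)
  · exact mem_union_right _ (mem_union_right _ ⟨i, rfl⟩)

-- The coefficient of `simpleRoot n k` when a vector is expanded in the basis of simple roots.
noncomputable def prefixSum (k : Fin n) : (Fin n → ℝ) →ₗ[ℝ] ℝ :=
  ∑ i ∈ Finset.Iic k, LinearMap.proj i

lemma prefixSum_apply (k : Fin n) (v : Fin n → ℝ) :
    prefixSum k v = ∑ i ∈ Finset.Iic k, v i := by
  simp [prefixSum]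

lemma prefixSum_single (k i : Fin n) :
    prefixSum k (Pi.single i 1) = if i ≤ k then 1 else 0 := by
  simp [prefixSum, Pi.single_apply]

lemma prefixSum_simpleRoot (k m : Fin n) :
    prefixSum k (simpleRoot n m) = if m = k then 1 else 0 := by
  by_cases h : (m : ℕ) + 1 < n
  · rw [simpleRoot, dif_pos h, map_sub, prefixSum_single, prefixSum_single]
    split_ifs <;> simp only [Fin.le_def, Fin.ext_iff] at * <;> norm_num <;> omega
  · rw [simpleRoot, dif_neg h, prefixSum_single]
    have := k.isLt
    split_ifs <;> simp only [Fin.le_def, Fin.ext_iff] at * <;> omega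

lemma simpleRoot_ne_simpleRoot {k m : Fin n} (h : m ≠ k) : simpleRoot n m ≠ simpleRoot n k :=
  fun he => by simpa [prefixSum_simpleRoot, h] using congrArg (prefixSum k) he

lemma span_simpleRoots_diff_le_ker (k : Fin n) :
    span ℝ (range (simpleRoot n) \ {simpleRoot n k}) ≤ LinearMap.ker (prefixSum k) := by
  rw [span_le]
  rintro _ ⟨⟨m, rfl⟩, hm⟩
  have hmk : m ≠ k := by rintro rfl; exact hm rfl
  simp [prefixSum_simpleRoot, hmk]

noncomputable def resonantWitness (k : Fin n) : Fin n ⊕ {j : Fin n // j ≠ k} → (Fin n → ℝ) :=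
  Sum.elim (fun j => if j ≤ k then Pi.single j 1 else Pi.single k 1 - Pi.single j 1)
    (fun j => Pi.single (j : Fin n) 1 + Pi.single k 1)

lemma resonantWitness_mem_positiveRoots (k : Fin n) (p : Fin n ⊕ {j : Fin n // j ≠ k}) :
    resonantWitness k p ∈ positiveRoots n := by
  rcases p with j | ⟨j, hj⟩
  · simp only [resonantWitness, Sum.elim_inl]
    split_ifs with h
    · exact Or.inr (Or.inl ⟨j, rfl⟩)
    · exact Or.inl ⟨k, j, not_le.1 h, Or.inl rfl⟩
  · simp only [resonantWitness, Sum.elim_inr]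
    rcases hj.lt_or_gt with h | h
    · exact Or.inl ⟨j, k, h, Or.inr rfl⟩
    · exact Or.inl ⟨k, j, h, Or.inr (add_comm _ _)⟩

lemma prefixSum_resonantWitness_ne_zero (k : Fin n) (p : Fin n ⊕ {j : Fin n // j ≠ k}) :
    prefixSum k (resonantWitness k p) ≠ 0 := by
  rcases p with j | ⟨j, hj⟩
  · simp only [resonantWitness, Sum.elim_inl]
    split_ifs with h <;> simp [prefixSum_single, h]
  · simp only [resonantWitness, Sum.elim_inr, map_add, prefixSum_single, le_refl, if_true]
    split_ifs <;> norm_num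

lemma resonantWitness_apply (k : Fin n) (p : Fin n ⊕ {j : Fin n // j ≠ k}) (x : Fin n) :
    resonantWitness k p x = -1 ∨ resonantWitness k p x = 0 ∨ resonantWitness k p x = 1 := by
  rcases p with j | ⟨j, hj⟩
  · simp only [resonantWitness, Sum.elim_inl]
    split_ifs <;> simp only [Pi.sub_apply, Pi.single_apply] <;> split_ifs <;> simp_all
  · simp only [resonantWitness, Sum.elim_inr, Pi.add_apply, Pi.single_apply]
    split_ifs <;> simp_all

lemma exists_resonantWitness_apply_eq_one (k : Fin n) (p : Fin n ⊕ {j : Fin n // j ≠ k}) :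
    ∃ x, resonantWitness k p x = 1 := by
  rcases p with j | ⟨j, hj⟩
  · simp only [resonantWitness, Sum.elim_inl]
    split_ifs with h
    · exact ⟨j, by simp⟩
    · exact ⟨k, by simp [(not_le.1 h).ne]⟩
  · exact ⟨j, by simp [resonantWitness, hj]⟩

lemma resonantWitness_injective (k : Fin n) : Function.Injective (resonantWitness k) := by
  refine Function.Injective.sumElim ?_ ?_ ?_
  · set f := fun j : Fin n =>
      if j ≤ k then (Pi.single j 1 : Fin n → ℝ) else Pi.single k 1 - Pi.single j 1
    have hsupp : ∀ j x, x ≠ k → (f j x ≠ 0 ↔ x = j) := by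
      intro j x hx
      simp only [f]
      split_ifs <;> simp [Pi.single_apply, hx]
    intro j j' h
    have hx : ∀ x, f j x = f j' x := congrFun h
    rcases eq_or_ne j k with rfl | hj
    · rcases eq_or_ne j' j with rfl | hj'
      · rfl
      · exact ((hsupp j j' hj').1 (hx j' ▸ (hsupp j' j' hj').2 rfl)).symm
    · exact (hsupp j' j hj).1 (hx j ▸ (hsupp j j hj).2 rfl)
  · rintro ⟨j, hj⟩ ⟨j', hj'⟩ h
    simpa [Pi.single_apply, hj, eq_comm] using congrFun h j
  · intro j j' h
    have hsum := congrArg (fun v : Fin n → ℝ => ∑ x, v x) h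
    split_ifs at hsum <;> norm_num [Finset.sum_add_distrib, Finset.sum_sub_distrib] at hsum

lemma posRay_resonantWitness_injective (k : Fin n) :
    Function.Injective (posRay ∘ resonantWitness k) := fun p q h =>
  resonantWitness_injective k (eq_of_posRay_eq (resonantWitness_apply k p)
    (exists_resonantWitness_apply_eq_one k q) h)

lemma card_resonantWitness_domain (k : Fin n) :
    Nat.card (Fin n ⊕ {j : Fin n // j ≠ k}) = 2 * n - 1 := by
  have := k.pos
  simp [Nat.card_eq_fintype_card, Fintype.card_subtype_compl]
  omega

lemma range_posRay_resonantWitness_subset (k : Fin n) :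
    range (posRay ∘ resonantWitness k) ⊆
      resonantRays (positiveRoots n) (range (simpleRoot n) \ {simpleRoot n k}) := by
  rintro _ ⟨p, rfl⟩
  exact posRay_mem_resonantRays (resonantWitness_mem_positiveRoots k p)
    fun hp => prefixSum_resonantWitness_ne_zero k p (span_simpleRoots_diff_le_ker k hp)

theorem le_coarseResonantCodim (k : Fin n) :
    2 * n - 1 ≤
      coarseResonantCodim (positiveRoots n) (range (simpleRoot n) \ {simpleRoot n k}) := by
  rw [← card_resonantWitness_domain k,
    ← ncard_range_of_injective (posRay_resonantWitness_injective k)]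
  exact ncard_le_ncard (range_posRay_resonantWitness_subset k)
    (resonantRays_finite positiveRoots_finite _)

section Zero

variable [NeZero n]

lemma single_mem_span_simpleRoots_diff_zero (m : ℕ) (hm0 : m ≠ 0) (hm : m < n) :
    Pi.single (⟨m, hm⟩ : Fin n) (1 : ℝ) ∈ span ℝ (range (simpleRoot n) \ {simpleRoot n 0}) := by
  have hα : simpleRoot n ⟨m, hm⟩ ∈ range (simpleRoot n) \ {simpleRoot n 0} :=
    ⟨mem_range_self _, simpleRoot_ne_simpleRoot (by simp [Fin.ext_iff, hm0])⟩
  by_cases h : m + 1 < n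
  · have he : Pi.single (⟨m, hm⟩ : Fin n) (1 : ℝ) =
        simpleRoot n ⟨m, hm⟩ + Pi.single ⟨m + 1, h⟩ 1 := by
      rw [simpleRoot, dif_pos h, sub_add_cancel]
    rw [he]
    exact add_mem (subset_span hα) (single_mem_span_simpleRoots_diff_zero (m + 1) (by omega) h)
  · have he : Pi.single (⟨m, hm⟩ : Fin n) (1 : ℝ) = simpleRoot n ⟨m, hm⟩ := by
      rw [simpleRoot, dif_neg h]
    exact he ▸ subset_span hα
termination_by n - m

lemma mem_span_simpleRoots_diff_zero_iff {v : Fin n → ℝ} :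
    v ∈ span ℝ (range (simpleRoot n) \ {simpleRoot n 0}) ↔ v 0 = 0 := by
  constructor
  · intro hv
    have := span_simpleRoots_diff_le_ker 0 hv
    rwa [LinearMap.mem_ker, prefixSum_apply, show Finset.Iic (0 : Fin n) = {0} by ext; simp,
      Finset.sum_singleton] at this
  · intro h0
    rw [← Finset.univ_sum_single v]
    refine sum_mem fun i _ => ?_
    rcases eq_or_ne i 0 with rfl | hi
    · simp [h0]
    · rw [← mul_one (v i), ← smul_eq_mul, Pi.single_smul]
      exact smul_mem _ _
        (single_mem_span_simpleRoots_diff_zero i (Fin.val_ne_zero_iff.2 hi) i.isLt)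

lemma resonantRays_simpleRoots_diff_zero :
    resonantRays (positiveRoots n) (range (simpleRoot n) \ {simpleRoot n 0}) =
      range (posRay ∘ resonantWitness 0) := by
  refine Subset.antisymm ?_ (range_posRay_resonantWitness_subset 0)
  rintro _ ⟨v, ⟨hv, hspan⟩, rfl⟩
  rw [mem_span_simpleRoots_diff_zero_iff] at hspan
  rcases hv with ⟨i, j, hij, rfl | rfl⟩ | ⟨i, rfl⟩ | ⟨i, rfl⟩
  · have hj : j ≠ 0 := (lt_of_le_of_lt (Fin.zero_le _) hij).ne'
    obtain rfl : i = 0 := by by_contra hi; simp [hi, hj] at hspan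
    exact ⟨Sum.inl j, by simp [resonantWitness, hj]⟩
  · have hj : j ≠ 0 := (lt_of_le_of_lt (Fin.zero_le _) hij).ne'
    obtain rfl : i = 0 := by by_contra hi; simp [hi, hj] at hspan
    exact ⟨Sum.inr ⟨j, hj⟩, by simp [resonantWitness, add_comm]⟩
  · obtain rfl : i = 0 := by by_contra hi; simp [hi] at hspan
    exact ⟨Sum.inl 0, by simp [resonantWitness]⟩
  · obtain rfl : i = 0 := by by_contra hi; simp [hi] at hspan
    exact ⟨Sum.inl 0, by simp [resonantWitness, posRay_smul two_pos]⟩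

theorem coarseResonantCodim_simpleRoots_diff_zero :
    coarseResonantCodim (positiveRoots n) (range (simpleRoot n) \ {simpleRoot n 0}) =
      2 * n - 1 := by
  rw [coarseResonantCodim, resonantRays_simpleRoots_diff_zero,
    ncard_range_of_injective (posRay_resonantWitness_injective 0), card_resonantWitness_domain]

end Zero

end BC

theorem stmt8_general (n : ℕ) :
    let e : Fin n → (Fin n → ℝ) := fun i => Pi.single i 1
    let Sp : Set (Fin n → ℝ) :=
      {v | (∃ i j : Fin n, i < j ∧ (v = e i - e j ∨ v = e i + e j)) ∨
        (∃ i : Fin n, v = e i) ∨ ∃ i : Fin n, v = (2 : ℝ) • e i}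
    let α : Fin n → (Fin n → ℝ) := fun k =>
      if h : (k : ℕ) + 1 < n then e k - e ⟨(k : ℕ) + 1, h⟩ else e k
    let crc : Set (Fin n → ℝ) → ℕ := fun Pi' =>
      Set.ncard {R : Set (Fin n → ℝ) | ∃ v, (v ∈ Sp ∧ v ∉ Submodule.span ℝ Pi') ∧
        R = {w | ∃ c : ℝ, 0 < c ∧ w = c • v}}
    (⨅ k : Fin n, crc (Set.range α \ {α k})) = 2 * n - 1 := by
  intro e Sp α crc
  change ⨅ k, coarseResonantCodim (BC.positiveRoots n)
    (range (BC.simpleRoot n) \ {BC.simpleRoot n k}) = 2 * n - 1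
  rcases n.eq_zero_or_pos with rfl | hpos
  · simp -- both sides are junk zeros: an empty infimum in `ℕ` and a truncated `2 * 0 - 1`
  have : NeZero n := ⟨hpos.ne'⟩
  exact le_antisymm ((ciInf_le' _ 0).trans_eq BC.coarseResonantCodim_simpleRoots_diff_zero)
    (le_ciInf BC.le_coarseResonantCodim)

/-- In the non-reduced root system of type `BC_n` (`n ≥ 2`), the minimum over simple roots
`α_k` of the coarse resonant codimension of `Π \ {α_k}` (counting positive-proportionality
classes of excluded positive roots) equals `2n - 1`. -/
theorem stmt8 (n : ℕ) (hn : 2 ≤ n) :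
    let e : Fin n → (Fin n → ℝ) := fun i => Pi.single i 1
    let Sp : Set (Fin n → ℝ) :=
      {v | (∃ i j : Fin n, i < j ∧ (v = e i - e j ∨ v = e i + e j)) ∨
        (∃ i : Fin n, v = e i) ∨ ∃ i : Fin n, v = (2 : ℝ) • e i}
    let α : Fin n → (Fin n → ℝ) := fun k =>
      if h : (k : ℕ) + 1 < n then e k - e ⟨(k : ℕ) + 1, h⟩ else e k
    let crc : Set (Fin n → ℝ) → ℕ := fun Pi' =>
      Set.ncard {R : Set (Fin n → ℝ) | ∃ v, (v ∈ Sp ∧ v ∉ Submodule.span ℝ Pi') ∧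
        R = {w | ∃ c : ℝ, 0 < c ∧ w = c • v}}
    (⨅ k : Fin n, crc (Set.range α \ {α k})) = 2 * n - 1 :=
  stmt8_general n
end

section
/- Let n ≥ 2. In the (non-reduced) root system of type BC_n, the minimum, over unordered pairs {α_i, α_j} of distinct simple roots in Π, of the coarse resonant codimension of Π ∖ {α_i, α_j} equals 4n − 4. -/
open Finset

variable {n : ℕ}

def ee (n : ℕ) (i : Fin n) : Fin n → ℝ := Pi.single i 1

def alp (n : ℕ) (k : Fin n) : Fin n → ℝ :=
  if h : (k : ℕ) + 1 < n then ee n k - ee n ⟨(k : ℕ) + 1, h⟩ else ee n k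

def rayOf (v : Fin n → ℝ) : Set (Fin n → ℝ) := {w | ∃ c : ℝ, 0 < c ∧ w = c • v}

def SP (n : ℕ) : Set (Fin n → ℝ) :=
  {v | (∃ i j : Fin n, i < j ∧ (v = ee n i - ee n j ∨ v = ee n i + ee n j)) ∨
    (∃ i : Fin n, v = ee n i) ∨ ∃ i : Fin n, v = (2 : ℝ) • ee n i}

noncomputable def crcOf (n : ℕ) (P : Set (Fin n → ℝ)) : ℕ :=
  Set.ncard {R : Set (Fin n → ℝ) | ∃ v, (v ∈ SP n ∧ v ∉ Submodule.span ℝ P) ∧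
    R = {w | ∃ c : ℝ, 0 < c ∧ w = c • v}}

lemma ee_apply (i x : Fin n) : ee n i x = if x = i then 1 else 0 := Pi.single_apply i 1 x

lemma ee_inj {a b : Fin n} (h : ee n a = ee n b) : a = b := by
  by_contra hne
  have := congrFun h a
  simp [ee_apply, hne] at this

lemma sub_eq_sub {a b c d : Fin n} (hab : a ≠ b)
    (h : ee n a - ee n b = ee n c - ee n d) : a = c ∧ b = d := by
  have ha := congrFun h a
  have hb := congrFun h b
  simp only [Pi.sub_apply, ee_apply, if_pos rfl, if_neg hab, if_neg (Ne.symm hab)] at ha hb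
  constructor
  · by_contra hac
    rw [if_neg hac] at ha
    split_ifs at ha <;> norm_num at ha
  · by_contra hbd
    rw [if_neg hbd] at hb
    split_ifs at hb <;> norm_num at hb

lemma add_eq_add {a b c d : Fin n} (hab : a ≠ b) (hcd : c ≠ d)
    (h : ee n a + ee n b = ee n c + ee n d) : (a = c ∧ b = d) ∨ (a = d ∧ b = c) := by
  have ha := congrFun h a
  have hb := congrFun h b
  simp only [Pi.add_apply, ee_apply] at ha hb
  simp only [if_true, if_neg hab, if_neg (Ne.symm hab)] at ha hb
  by_cases hac : a = c
  · left
    refine ⟨hac, ?_⟩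
    by_contra hbd
    have hbc : ¬ b = c := fun hh => hab (hac.trans hh.symm)
    rw [if_neg hbd, if_neg hbc] at hb
    norm_num at hb
  · right
    rw [if_neg hac] at ha
    have had : a = d := by
      by_contra had
      rw [if_neg had] at ha
      norm_num at ha
    refine ⟨had, ?_⟩
    have hbd : ¬ b = d := fun hh => hab (had.trans hh.symm)
    rw [if_neg hbd] at hb
    by_contra hbc
    rw [if_neg hbc] at hb
    norm_num at hb

lemma add_ne_sub {a b c d : Fin n} (hcd : c ≠ d) :
    ee n a + ee n b ≠ ee n c - ee n d := by
  intro h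
  have hd := congrFun h d
  simp only [Pi.add_apply, Pi.sub_apply, ee_apply, if_pos rfl, if_neg (Ne.symm hcd)] at hd
  split_ifs at hd <;> norm_num at hd

lemma add_ne_single {a b c : Fin n} (hab : a ≠ b) : ee n a + ee n b ≠ ee n c := by
  intro h
  by_cases hc : a = c
  · have hbc : ¬ b = c := fun hbc => hab (hc.trans hbc.symm)
    have := congrFun h b
    simp only [Pi.add_apply, ee_apply, if_pos rfl, if_neg (Ne.symm hab), if_neg hbc] at this
    norm_num at this
  · have := congrFun h a
    simp only [Pi.add_apply, ee_apply, if_pos rfl, if_neg hab, if_neg hc] at this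
    norm_num at this

lemma sub_ne_single {a b c : Fin n} (hab : a ≠ b) : ee n a - ee n b ≠ ee n c := by
  intro h
  have := congrFun h b
  simp only [Pi.sub_apply, ee_apply, if_pos rfl, if_neg (Ne.symm hab)] at this
  split_ifs at this <;> norm_num at this

/-- partial sum functional: sum of coordinates `i ≤ j`. -/
noncomputable def sig (n : ℕ) (j : Fin n) : (Fin n → ℝ) →ₗ[ℝ] ℝ :=
  ∑ i ∈ Finset.univ.filter (fun i => i ≤ j), LinearMap.proj i

lemma sig_apply (j : Fin n) (v : Fin n → ℝ) :
    sig n j v = ∑ i ∈ Finset.univ.filter (fun i => i ≤ j), v i := by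
  simp [sig]

lemma sig_single (j a : Fin n) : sig n j (ee n a) = if a ≤ j then 1 else 0 := by
  rw [sig_apply]
  rw [show (ee n a) = Pi.single a (1:ℝ) from rfl]
  rw [Finset.sum_pi_single']
  simp

lemma sig_alp {j k : Fin n} (hjk : k ≠ j) : sig n j (alp n k) = 0 := by
  unfold alp
  split_ifs with h
  · rw [map_sub, sig_single, sig_single]
    have hv : ((⟨(k:ℕ)+1, h⟩ : Fin n) : ℕ) = (k:ℕ)+1 := rfl
    by_cases hle : k ≤ j
    · have : ((k:ℕ)+1 ≤ (j:ℕ)) := by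
        have := Fin.lt_iff_val_lt_val.mp (lt_of_le_of_ne hle hjk)
        omega
      rw [if_pos hle, if_pos (by rw [Fin.le_iff_val_le_val, hv]; exact this)]
      norm_num
    · have : ¬ ((⟨(k:ℕ)+1, h⟩ : Fin n) ≤ j) := by
        rw [Fin.le_iff_val_le_val, hv]
        rw [Fin.le_iff_val_le_val] at hle
        omega
      rw [if_neg hle, if_neg this]
      norm_num
  · rw [sig_single, if_neg]
    rw [Fin.le_iff_val_le_val]
    have hk : (k:ℕ) = n - 1 := by omega
    have := j.isLt
    have := Fin.val_ne_of_ne hjk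
    omega

/-- the span of the simple roots minus two is contained in the kernel of `sig x`. -/
lemma span_sub_ker (x y : Fin n) {v : Fin n → ℝ}
    (hv : v ∈ Submodule.span ℝ (Set.range (alp n) \ {alp n x, alp n y})) :
    sig n x v = 0 := by
  have hle : Set.range (alp n) \ {alp n x, alp n y} ⊆ ↑(LinearMap.ker (sig n x)) := by
    rintro w ⟨⟨k, rfl⟩, hw⟩
    simp only [Set.mem_insert_iff, Set.mem_singleton_iff, not_or] at hw
    have hk : k ≠ x := fun h => hw.1 (by rw [h])
    exact sig_alp hk
  exact (Submodule.span_le.mpr hle) hv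

/-- nice vectors: all entries ≤ 1 and some entry equal to 1 -/
def Nice (v : Fin n → ℝ) : Prop := (∀ i, v i ≤ 1) ∧ (∃ i, v i = 1)

lemma rayOf_eq_iff {u v : Fin n → ℝ} (hu : Nice u) (hv : Nice v)
    (h : rayOf u = rayOf v) : u = v := by
  have hvmem : v ∈ rayOf v := ⟨1, one_pos, (one_smul ℝ v).symm⟩
  rw [← h] at hvmem
  obtain ⟨c, hc, hcv⟩ := hvmem
  obtain ⟨i, hi⟩ := hu.2
  obtain ⟨i', hi'⟩ := hv.2
  have h1 : c ≤ 1 := by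
    have := hv.1 i
    rw [hcv] at this
    simpa [Pi.smul_apply, hi] using this
  have h2 : 1 ≤ c := by
    have hvi' := congrFun hcv i'
    simp only [Pi.smul_apply, smul_eq_mul, hi'] at hvi'
    nlinarith [hu.1 i']
  have : c = 1 := le_antisymm h1 h2
  rw [hcv, this, one_smul]

lemma rayOf_two_smul (v : Fin n → ℝ) : rayOf ((2:ℝ) • v) = rayOf v := by
  ext w
  constructor
  · rintro ⟨c, hc, rfl⟩
    exact ⟨2*c, by linarith, by rw [smul_smul]; ring_nf⟩
  · rintro ⟨c, hc, rfl⟩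
    exact ⟨c/2, by linarith, by rw [smul_smul]; ring_nf⟩

lemma nice_single (a : Fin n) : Nice (ee n a) := by
  constructor
  · intro i
    rw [ee_apply]
    split_ifs <;> norm_num
  · exact ⟨a, by rw [ee_apply, if_pos rfl]⟩

lemma nice_sub {a b : Fin n} (hab : a ≠ b) : Nice (ee n a - ee n b) := by
  constructor
  · intro i
    simp only [Pi.sub_apply, ee_apply]
    split_ifs <;> norm_num
  · refine ⟨a, ?_⟩
    simp only [Pi.sub_apply, ee_apply, if_pos rfl, if_neg hab]
    norm_num

lemma nice_add {a b : Fin n} (hab : a ≠ b) : Nice (ee n a + ee n b) := by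
  constructor
  · intro i
    simp only [Pi.add_apply, ee_apply]
    split_ifs with h1 h2 h2
    · exact absurd (h1.symm.trans h2) hab
    all_goals norm_num
  · refine ⟨a, ?_⟩
    simp only [Pi.add_apply, ee_apply, if_pos rfl, if_neg hab]
    norm_num

lemma SP_finite : (SP n).Finite := by
  have : SP n ⊆ Set.range (fun x : Fin n × Fin n × Fin 4 =>
      match x.2.2 with
      | 0 => ee n x.1 - ee n x.2.1
      | 1 => ee n x.1 + ee n x.2.1
      | 2 => ee n x.1
      | 3 => (2:ℝ) • ee n x.1) := by
    rintro v (⟨i, j, _, (rfl | rfl)⟩ | ⟨i, rfl⟩ | ⟨i, rfl⟩)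
    · exact ⟨(i, j, 0), rfl⟩
    · exact ⟨(i, j, 1), rfl⟩
    · exact ⟨(i, i, 2), rfl⟩
    · exact ⟨(i, i, 3), rfl⟩
  exact Set.Finite.subset (Set.finite_range _) this

def RaysOf (n : ℕ) (P : Set (Fin n → ℝ)) : Set (Set (Fin n → ℝ)) :=
  {R : Set (Fin n → ℝ) | ∃ v, (v ∈ SP n ∧ v ∉ Submodule.span ℝ P) ∧
    R = {w | ∃ c : ℝ, 0 < c ∧ w = c • v}}

lemma crcOf_eq (P : Set (Fin n → ℝ)) : crcOf n P = (RaysOf n P).ncard := rfl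

lemma raysOf_subset (P : Set (Fin n → ℝ)) : RaysOf n P ⊆ rayOf '' (SP n) := by
  rintro R ⟨v, ⟨hv, _⟩, rfl⟩
  exact ⟨v, hv, rfl⟩

lemma raysOf_finite (P : Set (Fin n → ℝ)) : (RaysOf n P).Finite :=
  Set.Finite.subset (Set.Finite.image _ SP_finite) (raysOf_subset P)

def pfun (n : ℕ) (r t : Fin n) : Fin n → ℝ :=
  if t < r then ee n t + ee n r else ee n r + ee n t

def mfun (n : ℕ) (r : Fin n) (h1 : (r : ℕ) + 1 < n) (t : Fin n) : Fin n → ℝ :=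
  if r < t then ee n r - ee n t else ee n t - ee n ⟨(r : ℕ) + 1, h1⟩

lemma pfun_eq_add {r t : Fin n} (ht : t ≠ r) :
    ∃ a b : Fin n, a ≠ b ∧ pfun n r t = ee n a + ee n b ∧ ({a, b} : Set (Fin n)) = {t, r} := by
  unfold pfun
  split_ifs with hl
  · exact ⟨t, r, ht, rfl, rfl⟩
  · exact ⟨r, t, ht.symm, rfl, Set.pair_comm r t⟩

lemma pfun_inj {r t s : Fin n} (ht : t ≠ r) (hs : s ≠ r) (h : pfun n r t = pfun n r s) :
    t = s := by
  obtain ⟨a, b, hab, hab2, hab3⟩ := pfun_eq_add ht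
  obtain ⟨c, d, hcd, hcd2, hcd3⟩ := pfun_eq_add hs
  rw [hab2, hcd2] at h
  have := add_eq_add hab hcd h
  have hset : ({t, r} : Set (Fin n)) = {s, r} := by
    rw [← hab3, ← hcd3]
    rcases this with ⟨rfl, rfl⟩ | ⟨rfl, rfl⟩
    · rfl
    · exact Set.pair_comm a b
  have := hset ▸ (Set.mem_insert t {r})
  rcases this with h' | h'
  · exact h'
  · exact absurd h' ht

lemma pfun_cross {r r' t s : Fin n} (hrr' : r ≠ r') (ht : t ≠ r) (ht' : t ≠ r')
    (hs : s ≠ r') (hsr : s ≠ r) (h : pfun n r t = pfun n r' s) : False := by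
  obtain ⟨a, b, hab, hab2, hab3⟩ := pfun_eq_add ht
  obtain ⟨c, d, hcd, hcd2, hcd3⟩ := pfun_eq_add hs
  rw [hab2, hcd2] at h
  have hset : ({t, r} : Set (Fin n)) = {s, r'} := by
    rw [← hab3, ← hcd3]
    rcases add_eq_add hab hcd h with ⟨rfl, rfl⟩ | ⟨rfl, rfl⟩
    · rfl
    · exact Set.pair_comm a b
  have hr : r ∈ ({s, r'} : Set (Fin n)) := hset ▸ (Set.mem_insert_of_mem _ rfl)
  rcases hr with h' | h'
  · exact hsr h'.symm
  · exact hrr' h'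

lemma pfun_ne_sub {r t c d : Fin n} (ht : t ≠ r) (hcd : c ≠ d) :
    pfun n r t ≠ ee n c - ee n d := by
  obtain ⟨a, b, hab, he, _⟩ := pfun_eq_add ht
  rw [he]
  exact add_ne_sub hcd

lemma pfun_ne_single {r t c : Fin n} (ht : t ≠ r) : pfun n r t ≠ ee n c := by
  obtain ⟨a, b, hab, he, _⟩ := pfun_eq_add ht
  rw [he]
  exact add_ne_single hab

lemma mfun_eq_sub {r t : Fin n} (h1 : (r : ℕ) + 1 < n) (ht : t ≠ r) :
    ∃ a b : Fin n, a ≠ b ∧ mfun n r h1 t = ee n a - ee n b := by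
  unfold mfun
  split_ifs with hl
  · exact ⟨r, t, ne_of_lt hl, rfl⟩
  · refine ⟨t, ⟨(r : ℕ) + 1, h1⟩, ?_, rfl⟩
    apply Fin.ne_of_val_ne
    have : (t : ℕ) ≤ (r : ℕ) := by
      rw [Fin.lt_iff_val_lt_val] at hl
      omega
    simp only []
    omega

lemma mfun_inj {r t s : Fin n} (h1 : (r : ℕ) + 1 < n) (ht : t ≠ r) (hs : s ≠ r)
    (h : mfun n r h1 t = mfun n r h1 s) : t = s := by
  have htr1 : ∀ u : Fin n, u ≠ r → ¬ r < u → u ≠ ⟨(r : ℕ) + 1, h1⟩ := by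
    intro u hu hru
    apply Fin.ne_of_val_ne
    rw [Fin.lt_iff_val_lt_val] at hru
    have := Fin.val_ne_of_ne hu
    simp only []
    omega
  unfold mfun at h
  split_ifs at h with h2 h3 h3
  · exact (sub_eq_sub (ne_of_lt h2) h).2
  · exact absurd (sub_eq_sub (ne_of_lt h2) h).1.symm hs
  · exact absurd (sub_eq_sub (htr1 t ht h2) h).1 ht
  · exact (sub_eq_sub (htr1 t ht h2) h).1

lemma mfun_ne_cross {p q t s : Fin n} (h1 : (p : ℕ) + 1 < n) (hpq : p < q) (ht : t ≠ p)
    (hqs : q < s) : mfun n p h1 t ≠ ee n q - ee n s := by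
  unfold mfun
  split_ifs with hl
  · intro h
    exact ne_of_lt hpq (sub_eq_sub (ne_of_lt hl) h).1
  · intro h
    have htne : t ≠ ⟨(p : ℕ) + 1, h1⟩ := by
      apply Fin.ne_of_val_ne
      rw [Fin.lt_iff_val_lt_val] at hl
      have := Fin.val_ne_of_ne ht
      simp only []
      omega
    have htq : t = q := (sub_eq_sub htne h).1
    rw [Fin.lt_iff_val_lt_val] at hl hpq
    have := Fin.val_ne_of_ne ht
    rw [Fin.ext_iff] at htq
    omega

def Jt (n : ℕ) (p q : Fin n) : Type :=
  (({t : Fin n // t ≠ p ∧ t ≠ q} ⊕ {t : Fin n // t ≠ p ∧ t ≠ q}) ⊕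
    ({t : Fin n // t ≠ p} ⊕ {t : Fin n // t ≠ q})) ⊕ Bool

def fam (p q : Fin n) (h1 : (p : ℕ) + 1 < n) : Jt n p q → (Fin n → ℝ)
  | .inl (.inl (.inl t)) => pfun n p t.1
  | .inl (.inl (.inr t)) => pfun n q t.1
  | .inl (.inr (.inl t)) => mfun n p h1 t.1
  | .inl (.inr (.inr t)) => if q < t.1 then ee n q - ee n t.1 else ee n t.1
  | .inr b => cond b (ee n p + ee n q) (ee n q)

lemma card_Jt (p q : Fin n) (hpq : p ≠ q) : Nat.card (Jt n p q) = 4 * n - 4 := by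
  have hn2 : 2 ≤ n := by
    have h1 : (p : ℕ) ≠ (q : ℕ) := Fin.val_ne_of_ne hpq
    have := p.isLt
    have := q.isLt
    omega
  have c1 : Nat.card {t : Fin n // t ≠ p ∧ t ≠ q} = n - 2 := by
    rw [Nat.card_eq_fintype_card]
    have e1 : Fintype.card {t : Fin n // t ≠ p ∧ t ≠ q} =
        Fintype.card {t : Fin n // ¬ t ∈ ({p, q} : Finset (Fin n))} := by
      apply Fintype.card_congr
      apply Equiv.subtypeEquivRight
      intro x
      simp [not_or]
    rw [e1, Fintype.card_subtype_compl, Fintype.card_coe, Finset.card_pair hpq,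
      Fintype.card_fin]
  have c2 : ∀ r : Fin n, Nat.card {t : Fin n // t ≠ r} = n - 1 := by
    intro r
    rw [Nat.card_eq_fintype_card]
    have e1 : Fintype.card {t : Fin n // t ≠ r} =
        Fintype.card {t : Fin n // ¬ t ∈ ({r} : Finset (Fin n))} := by
      apply Fintype.card_congr
      apply Equiv.subtypeEquivRight
      intro x
      simp
    rw [e1, Fintype.card_subtype_compl, Fintype.card_coe, Finset.card_singleton,
      Fintype.card_fin]
  have cb : Nat.card Bool = 2 := Nat.card_eq_fintype_card.trans (by simp)
  unfold Jt
  simp only [Nat.card_sum, c1, c2, cb]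
  omega

section Family

variable {p q : Fin n} {h1 : (p : ℕ) + 1 < n}

lemma not_lt_ne_lt {a b : Fin n} (h : ¬ a < b) (hne : a ≠ b) : b < a :=
  lt_of_le_of_ne (not_lt.mp h) (Ne.symm hne)

lemma fam_SP (hpq : p < q) (x : Jt n p q) : fam p q h1 x ∈ SP n := by
  rcases x with (((⟨t, ht1, ht2⟩ | ⟨t, ht1, ht2⟩) | (⟨t, ht⟩ | ⟨t, ht⟩)) | b)
  · simp only [fam, pfun]
    split_ifs with hl
    · exact Or.inl ⟨t, p, hl, Or.inr rfl⟩
    · exact Or.inl ⟨p, t, not_lt_ne_lt hl ht1, Or.inr rfl⟩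
  · simp only [fam, pfun]
    split_ifs with hl
    · exact Or.inl ⟨t, q, hl, Or.inr rfl⟩
    · exact Or.inl ⟨q, t, not_lt_ne_lt hl ht2, Or.inr rfl⟩
  · simp only [fam, mfun]
    split_ifs with hl
    · exact Or.inl ⟨p, t, hl, Or.inl rfl⟩
    · refine Or.inl ⟨t, ⟨(p : ℕ) + 1, h1⟩, ?_, Or.inl rfl⟩
      rw [Fin.lt_iff_val_lt_val]
      rw [Fin.lt_iff_val_lt_val] at hl
      simp only []
      omega
  · simp only [fam]
    split_ifs with hl
    · exact Or.inl ⟨q, t, hl, Or.inl rfl⟩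
    · exact Or.inr (Or.inl ⟨t, rfl⟩)
  · cases b
    · exact Or.inr (Or.inl ⟨q, rfl⟩)
    · exact Or.inl ⟨p, q, hpq, Or.inr rfl⟩

lemma fam_nice (hpq : p < q) (x : Jt n p q) : Nice (fam p q h1 x) := by
  rcases x with (((⟨t, ht1, ht2⟩ | ⟨t, ht1, ht2⟩) | (⟨t, ht⟩ | ⟨t, ht⟩)) | b)
  · simp only [fam, pfun]
    split_ifs with hl
    · exact nice_add ht1
    · exact nice_add (Ne.symm ht1)
  · simp only [fam, pfun]
    split_ifs with hl
    · exact nice_add ht2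
    · exact nice_add (Ne.symm ht2)
  · simp only [fam, mfun]
    split_ifs with hl
    · exact nice_sub (ne_of_lt hl)
    · apply nice_sub
      rw [Fin.ne_iff_vne]
      rw [Fin.lt_iff_val_lt_val] at hl
      have := Fin.val_ne_of_ne ht
      simp only []
      omega
  · simp only [fam]
    split_ifs with hl
    · exact nice_sub (ne_of_lt hl)
    · exact nice_single t
  · cases b
    · exact nice_single q
    · exact nice_add (ne_of_lt hpq)

lemma fam_sig (hpq : p < q) (x : Jt n p q) :
    sig n p (fam p q h1 x) ≠ 0 ∨ sig n q (fam p q h1 x) ≠ 0 := by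
  have hpq' : (p : ℕ) < (q : ℕ) := hpq
  have hpq'' : p ≤ q := le_of_lt hpq
  rcases x with (((⟨t, ht1, ht2⟩ | ⟨t, ht1, ht2⟩) | (⟨t, ht⟩ | ⟨t, ht⟩)) | b)
  · refine Or.inr ?_
    simp only [fam, pfun]
    split_ifs with hl
    · rw [map_add, sig_single, sig_single, if_pos (le_of_lt (lt_trans hl hpq)),
        if_pos hpq'']
      norm_num
    · rw [map_add, sig_single, sig_single, if_pos hpq'']
      split_ifs <;> norm_num
  · refine Or.inr ?_
    simp only [fam, pfun]
    split_ifs with hl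
    · rw [map_add, sig_single, sig_single, if_pos (le_of_lt hl), if_pos (le_refl q)]
      norm_num
    · rw [map_add, sig_single, sig_single, if_pos (le_refl q),
        if_neg (not_le.mpr (not_lt_ne_lt hl ht2))]
      norm_num
  · refine Or.inl ?_
    simp only [fam, mfun]
    split_ifs with hl
    · rw [map_sub, sig_single, sig_single, if_pos (le_refl p), if_neg (not_le.mpr hl)]
      norm_num
    · have h2 : ¬ (⟨(p : ℕ) + 1, h1⟩ : Fin n) ≤ p := by
        rw [Fin.le_iff_val_le_val]
        simp only []
        omega
      rw [map_sub, sig_single, sig_single, if_pos (not_lt.mp hl), if_neg h2]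
      norm_num
  · refine Or.inr ?_
    simp only [fam]
    split_ifs with hl
    · rw [map_sub, sig_single, sig_single, if_pos (le_refl q), if_neg (not_le.mpr hl)]
      norm_num
    · rw [sig_single, if_pos (not_lt.mp hl)]
      norm_num
  · refine Or.inr ?_
    cases b
    · simp only [fam, cond_false]
      rw [sig_single, if_pos (le_refl q)]
      norm_num
    · simp only [fam, cond_true]
      rw [map_add, sig_single, sig_single, if_pos hpq'', if_pos (le_refl q)]
      norm_num

end Family

lemma fam_inj {p q : Fin n} {h1 : (p : ℕ) + 1 < n} (hpq : p < q) :
    Function.Injective (fam p q h1) := by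
  have hqp : q ≠ p := ne_of_gt hpq
  have hpq0 : p ≠ q := ne_of_lt hpq
  have hx0 : ee n p + ee n q = pfun n p q := by
    unfold pfun
    rw [if_neg (not_lt.mpr (le_of_lt hpq))]
  have hx0' : ee n p + ee n q = pfun n q p := by
    unfold pfun
    rw [if_pos hpq]
  rintro (((⟨t, ht1, ht2⟩ | ⟨t, ht1, ht2⟩) | (⟨t, ht⟩ | ⟨t, ht⟩)) | b)
         (((⟨s, hs1, hs2⟩ | ⟨s, hs1, hs2⟩) | (⟨s, hs⟩ | ⟨s, hs⟩)) | c) h <;>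
    simp only [fam] at h
  -- (A1,A1)
  · obtain rfl := pfun_inj ht1 hs1 h
    rfl
  -- (A1,A2)
  · exact (pfun_cross hpq0 ht1 ht2 hs2 hs1 h).elim
  -- (A1,B1)
  · obtain ⟨a, b, hab, he⟩ := mfun_eq_sub h1 hs
    rw [he] at h
    exact (pfun_ne_sub ht1 hab h).elim
  -- (A1,B2)
  · split_ifs at h with hl
    · exact (pfun_ne_sub ht1 (ne_of_lt hl) h).elim
    · exact (pfun_ne_single ht1 h).elim
  -- (A1,C)
  · cases c
    · exact (pfun_ne_single ht1 h).elim
    · simp only [cond_true] at h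
      rw [hx0] at h
      exact absurd (pfun_inj ht1 hqp h) ht2
  -- (A2,A1)
  · exact (pfun_cross hqp ht2 ht1 hs1 hs2 h).elim
  -- (A2,A2)
  · obtain rfl := pfun_inj ht2 hs2 h
    rfl
  -- (A2,B1)
  · obtain ⟨a, b, hab, he⟩ := mfun_eq_sub h1 hs
    rw [he] at h
    exact (pfun_ne_sub ht2 hab h).elim
  -- (A2,B2)
  · split_ifs at h with hl
    · exact (pfun_ne_sub ht2 (ne_of_lt hl) h).elim
    · exact (pfun_ne_single ht2 h).elim
  -- (A2,C)
  · cases c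
    · exact (pfun_ne_single ht2 h).elim
    · simp only [cond_true] at h
      rw [hx0'] at h
      exact absurd (pfun_inj ht2 hpq0 h) ht1
  -- (B1,A1)
  · obtain ⟨a, b, hab, he⟩ := mfun_eq_sub h1 ht
    rw [he] at h
    exact (pfun_ne_sub hs1 hab h.symm).elim
  -- (B1,A2)
  · obtain ⟨a, b, hab, he⟩ := mfun_eq_sub h1 ht
    rw [he] at h
    exact (pfun_ne_sub hs2 hab h.symm).elim
  -- (B1,B1)
  · obtain rfl := mfun_inj h1 ht hs h
    rfl
  -- (B1,B2)
  · split_ifs at h with hl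
    · exact (mfun_ne_cross h1 hpq ht hl h).elim
    · obtain ⟨a, b, hab, he⟩ := mfun_eq_sub h1 ht
      rw [he] at h
      exact (sub_ne_single hab h).elim
  -- (B1,C)
  · cases c
    · obtain ⟨a, b, hab, he⟩ := mfun_eq_sub h1 ht
      rw [he] at h
      exact (sub_ne_single hab h).elim
    · simp only [cond_true] at h
      obtain ⟨a, b, hab, he⟩ := mfun_eq_sub h1 ht
      rw [he] at h
      exact (add_ne_sub hab h.symm).elim
  -- (B2,A1)
  · split_ifs at h with hl
    · exact (pfun_ne_sub hs1 (ne_of_lt hl) h.symm).elim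
    · exact (pfun_ne_single hs1 h.symm).elim
  -- (B2,A2)
  · split_ifs at h with hl
    · exact (pfun_ne_sub hs2 (ne_of_lt hl) h.symm).elim
    · exact (pfun_ne_single hs2 h.symm).elim
  -- (B2,B1)
  · split_ifs at h with hl
    · exact (mfun_ne_cross h1 hpq hs hl h.symm).elim
    · obtain ⟨a, b, hab, he⟩ := mfun_eq_sub h1 hs
      rw [he] at h
      exact (sub_ne_single hab h.symm).elim
  -- (B2,B2)
  · split_ifs at h with hl hl2 hl2
    · obtain rfl := (sub_eq_sub (ne_of_lt hl) h).2
      rfl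
    · exact (sub_ne_single (ne_of_lt hl) h).elim
    · exact (sub_ne_single (ne_of_lt hl2) h.symm).elim
    · obtain rfl := ee_inj h
      rfl
  -- (B2,C)
  · cases c
    · split_ifs at h with hl
      · exact (sub_ne_single (ne_of_lt hl) h).elim
      · exact absurd (ee_inj h) ht
    · simp only [cond_true] at h
      split_ifs at h with hl
      · exact (add_ne_sub (ne_of_lt hl) h.symm).elim
      · exact (add_ne_single (ne_of_lt hpq) h.symm).elim
  -- (C,A1)
  · cases b
    · exact (pfun_ne_single hs1 h.symm).elim
    · simp only [cond_true] at h
      rw [hx0] at h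
      exact absurd (pfun_inj hqp hs1 h).symm hs2
  -- (C,A2)
  · cases b
    · exact (pfun_ne_single hs2 h.symm).elim
    · simp only [cond_true] at h
      rw [hx0'] at h
      exact absurd (pfun_inj hpq0 hs2 h).symm hs1
  -- (C,B1)
  · cases b
    · obtain ⟨a, b, hab, he⟩ := mfun_eq_sub h1 hs
      rw [he] at h
      exact (sub_ne_single hab h.symm).elim
    · simp only [cond_true] at h
      obtain ⟨a, b, hab, he⟩ := mfun_eq_sub h1 hs
      rw [he] at h
      exact (add_ne_sub hab h).elim
  -- (C,B2)
  · cases b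
    · split_ifs at h with hl
      · exact (sub_ne_single (ne_of_lt hl) h.symm).elim
      · exact absurd (ee_inj h).symm hs
    · simp only [cond_true] at h
      split_ifs at h with hl
      · exact (add_ne_sub (ne_of_lt hl) h).elim
      · exact (add_ne_single (ne_of_lt hpq) h).elim
  -- (C,C)
  · cases b <;> cases c
    · rfl
    · simp only [cond_false, cond_true] at h
      exact (add_ne_single (ne_of_lt hpq) h.symm).elim
    · simp only [cond_false, cond_true] at h
      exact (add_ne_single (ne_of_lt hpq) h).elim
    · rfl

lemma lower_bound {p q : Fin n} (hpq : p < q) :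
    4 * n - 4 ≤ crcOf n (Set.range (alp n) \ {alp n p, alp n q}) := by
  have h1 : (p : ℕ) + 1 < n := by
    have h2 : (p : ℕ) < (q : ℕ) := hpq
    have := q.isLt
    omega
  set P := Set.range (alp n) \ {alp n p, alp n q} with hP
  have hexcl : ∀ x : Jt n p q, fam p q h1 x ∉ Submodule.span ℝ P := by
    intro x hmem
    have e1 : sig n p (fam p q h1 x) = 0 := span_sub_ker p q hmem
    have e2 : sig n q (fam p q h1 x) = 0 := by
      refine span_sub_ker q p ?_
      rwa [Set.pair_comm (alp n q) (alp n p)]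
    rcases fam_sig hpq x with h | h
    · exact h e1
    · exact h e2
  have rayinj : Function.Injective (fun x => rayOf (fam p q h1 x)) := by
    intro x y h
    exact fam_inj hpq (rayOf_eq_iff (fam_nice hpq x) (fam_nice hpq y) h)
  have hsub : Set.range (fun x => rayOf (fam p q h1 x)) ⊆ RaysOf n P := by
    rintro R ⟨x, rfl⟩
    exact ⟨fam p q h1 x, ⟨fam_SP hpq x, hexcl x⟩, rfl⟩
  calc 4 * n - 4 = Nat.card (Jt n p q) := (card_Jt p q (ne_of_lt hpq)).symm
    _ = Nat.card (Set.range (fun x => rayOf (fam p q h1 x))) :=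
        (Nat.card_range_of_injective rayinj).symm
    _ = (Set.range (fun x => rayOf (fam p q h1 x))).ncard := Nat.card_coe_set_eq _
    _ ≤ (RaysOf n P).ncard := Set.ncard_le_ncard hsub (raysOf_finite P)
    _ = crcOf n P := (crcOf_eq P).symm

lemma alp_inj : Function.Injective (alp n) := by
  intro k k' h
  by_contra hne
  unfold alp at h
  split_ifs at h with h2 h3 h3
  · have hk : k ≠ ⟨(k : ℕ) + 1, h2⟩ :=
      Fin.ne_of_val_ne (show (k : ℕ) ≠ (k : ℕ) + 1 by omega)
    exact hne (sub_eq_sub hk h).1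
  · exact (sub_ne_single
      (Fin.ne_of_val_ne (show (k : ℕ) ≠ (k : ℕ) + 1 by omega)) h).elim
  · exact (sub_ne_single
      (Fin.ne_of_val_ne (show (k' : ℕ) ≠ (k' : ℕ) + 1 by omega)) h.symm).elim
  · have := Fin.val_ne_of_ne hne
    have := k.isLt
    have := k'.isLt
    omega

lemma alp_mem {x y k : Fin n} (hx : k ≠ x) (hy : k ≠ y) :
    alp n k ∈ Set.range (alp n) \ {alp n x, alp n y} := by
  refine ⟨⟨k, rfl⟩, ?_⟩
  simp only [Set.mem_insert_iff, Set.mem_singleton_iff, not_or]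
  exact ⟨fun h => hx (alp_inj h), fun h => hy (alp_inj h)⟩

lemma mem_span01 (hn : 2 ≤ n) {Z O : Fin n} (hZ : (Z : ℕ) = 0) (hO : (O : ℕ) = 1) :
    ∀ d : ℕ, ∀ j : Fin n, (j : ℕ) + d = n - 1 → 2 ≤ (j : ℕ) →
      ee n j ∈ Submodule.span ℝ (Set.range (alp n) \ {alp n Z, alp n O}) := by
  intro d
  induction d with
  | zero =>
    intro j hj h2
    have hjn : ¬ ((j : ℕ) + 1 < n) := by omega
    have halp : alp n j = ee n j := by
      unfold alp
      rw [dif_neg hjn]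
    rw [← halp]
    exact Submodule.subset_span
      (alp_mem (Fin.ne_of_val_ne (by omega)) (Fin.ne_of_val_ne (by omega)))
  | succ d ih =>
    intro j hj h2
    have hj1 : (j : ℕ) + 1 < n := by omega
    have halp : alp n j = ee n j - ee n ⟨(j : ℕ) + 1, hj1⟩ := by
      unfold alp
      rw [dif_pos hj1]
    have hmem1 : alp n j ∈ Submodule.span ℝ (Set.range (alp n) \ {alp n Z, alp n O}) :=
      Submodule.subset_span
        (alp_mem (Fin.ne_of_val_ne (by omega)) (Fin.ne_of_val_ne (by omega)))
    have hmem2 := ih ⟨(j : ℕ) + 1, hj1⟩ (by simp only []; omega) (by simp only []; omega)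
    have : ee n j = alp n j + ee n ⟨(j : ℕ) + 1, hj1⟩ := by
      rw [halp, sub_add_cancel]
    rw [this]
    exact Submodule.add_mem _ hmem1 hmem2

/-- every root vanishing at coordinates 0 and 1 lies in the span of `Π \ {α₀, α₁}`. -/
lemma root_mem_span01 (hn : 2 ≤ n) {Z O : Fin n} (hZ : (Z : ℕ) = 0) (hO : (O : ℕ) = 1)
    {v : Fin n → ℝ} (hv : v ∈ SP n) (h0 : v Z = 0) (h1 : v O = 0) :
    v ∈ Submodule.span ℝ (Set.range (alp n) \ {alp n Z, alp n O}) := by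
  have key : ∀ i : Fin n, 2 ≤ (i : ℕ) →
      ee n i ∈ Submodule.span ℝ (Set.range (alp n) \ {alp n Z, alp n O}) := by
    intro i hi
    exact mem_span01 hn hZ hO (n - 1 - (i : ℕ)) i (by have := i.isLt; omega) hi
  have hZO : Z ≠ O := Fin.ne_of_val_ne (by omega)
  have single_ne : ∀ (i : Fin n) (x : Fin n), v = ee n i → v x = 0 → i ≠ x := by
    intro i x hvi hx hix
    rw [hvi, ee_apply, if_pos hix.symm] at hx
    norm_num at hx
  rcases hv with ⟨i, k, hik, (rfl | rfl)⟩ | ⟨i, rfl⟩ | ⟨i, rfl⟩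
  · -- minus
    have hne : ∀ x : Fin n, (ee n i - ee n k) x = 0 → i ≠ x ∧ k ≠ x := by
      intro x hx
      simp only [Pi.sub_apply, ee_apply] at hx
      constructor
      · intro hix
        rw [if_pos hix.symm, if_neg (fun h : x = k => (ne_of_lt hik) (hix.trans h))] at hx
        norm_num at hx
      · intro hkx
        rw [if_pos hkx.symm, if_neg (fun h : x = i => (ne_of_lt hik) (h.symm.trans hkx.symm))] at hx
        norm_num at hx
    obtain ⟨hiZ, hkZ⟩ := hne Z h0
    obtain ⟨hiO, hkO⟩ := hne O h1
    have hi2 : 2 ≤ (i : ℕ) := by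
      have := Fin.val_ne_of_ne hiZ
      have := Fin.val_ne_of_ne hiO
      omega
    have hk2 : 2 ≤ (k : ℕ) := by
      have := Fin.val_ne_of_ne hkZ
      have := Fin.val_ne_of_ne hkO
      omega
    exact Submodule.sub_mem _ (key i hi2) (key k hk2)
  · -- plus
    have hne : ∀ x : Fin n, (ee n i + ee n k) x = 0 → i ≠ x ∧ k ≠ x := by
      intro x hx
      simp only [Pi.add_apply, ee_apply] at hx
      constructor
      · intro hix
        rw [if_pos hix.symm] at hx
        split_ifs at hx <;> norm_num at hx
      · intro hkx
        rw [if_pos hkx.symm] at hx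
        split_ifs at hx <;> norm_num at hx
    obtain ⟨hiZ, hkZ⟩ := hne Z h0
    obtain ⟨hiO, hkO⟩ := hne O h1
    have hi2 : 2 ≤ (i : ℕ) := by
      have := Fin.val_ne_of_ne hiZ
      have := Fin.val_ne_of_ne hiO
      omega
    have hk2 : 2 ≤ (k : ℕ) := by
      have := Fin.val_ne_of_ne hkZ
      have := Fin.val_ne_of_ne hkO
      omega
    exact Submodule.add_mem _ (key i hi2) (key k hk2)
  · -- single
    have hiZ := single_ne i Z rfl h0
    have hiO := single_ne i O rfl h1
    have hi2 : 2 ≤ (i : ℕ) := by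
      have := Fin.val_ne_of_ne hiZ
      have := Fin.val_ne_of_ne hiO
      omega
    exact key i hi2
  · -- double
    have hne : ∀ x : Fin n, ((2 : ℝ) • ee n i) x = 0 → i ≠ x := by
      intro x hx hix
      simp only [Pi.smul_apply, ee_apply, smul_eq_mul, if_pos hix.symm] at hx
      norm_num at hx
    have hiZ := hne Z h0
    have hiO := hne O h1
    have hi2 : 2 ≤ (i : ℕ) := by
      have := Fin.val_ne_of_ne hiZ
      have := Fin.val_ne_of_ne hiO
      omega
    exact Submodule.smul_mem _ _ (key i hi2)

def J0 (n : ℕ) : Type := Bool ⊕ Bool ⊕ (Bool × Bool × Fin (n - 2))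

instance : Finite (J0 n) := by unfold J0; infer_instance

lemma card_J0 (hn : 2 ≤ n) : Nat.card (J0 n) = 4 * n - 4 := by
  have cb : Nat.card Bool = 2 := Nat.card_eq_fintype_card.trans (by simp)
  have cf : Nat.card (Fin (n - 2)) = n - 2 := by
    rw [Nat.card_eq_fintype_card, Fintype.card_fin]
  unfold J0
  simp only [Nat.card_sum, Nat.card_prod, cb, cf]
  omega

def g0 (n : ℕ) (hn : 2 ≤ n) : J0 n → (Fin n → ℝ)
  | .inl b => cond b (ee n ⟨0, by omega⟩ + ee n ⟨1, by omega⟩)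
      (ee n ⟨0, by omega⟩ - ee n ⟨1, by omega⟩)
  | .inr (.inl b) => cond b (ee n ⟨1, by omega⟩) (ee n ⟨0, by omega⟩)
  | .inr (.inr (s, i, k)) =>
      cond s
        (ee n (cond i ⟨1, by omega⟩ ⟨0, by omega⟩) + ee n ⟨(k : ℕ) + 2, by have := k.isLt; omega⟩)
        (ee n (cond i ⟨1, by omega⟩ ⟨0, by omega⟩) - ee n ⟨(k : ℕ) + 2, by have := k.isLt; omega⟩)

lemma upper_cover (hn : 2 ≤ n) {Z O : Fin n} (hZ : (Z : ℕ) = 0) (hO : (O : ℕ) = 1) :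
    RaysOf n (Set.range (alp n) \ {alp n Z, alp n O}) ⊆
      Set.range (fun x => rayOf (g0 n hn x)) := by
  rintro R ⟨v, ⟨hSP, hns⟩, rfl⟩
  have hv0 : v Z ≠ 0 ∨ v O ≠ 0 := by
    by_contra hcon
    push_neg at hcon
    exact hns (root_mem_span01 hn hZ hO hSP hcon.1 hcon.2)
  have pairix : ∀ (i k x : Fin n), i < k →
      ((ee n i - ee n k) x ≠ 0 ∨ (ee n i + ee n k) x ≠ 0) → x = i ∨ x = k := by
    intro i k x _ hx
    by_contra hc
    push_neg at hc
    rcases hx with hx | hx <;>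
      simp [Pi.sub_apply, Pi.add_apply, ee_apply, if_neg hc.1, if_neg hc.2] at hx
  have cover : ∀ w : Fin n → ℝ, rayOf v = rayOf w →
      (∃ x, g0 n hn x = w) → ∃ x, (fun x => rayOf (g0 n hn x)) x = {w' | ∃ c : ℝ, 0 < c ∧ w' = c • v} := by
    rintro w hw ⟨x, hx⟩
    exact ⟨x, by show rayOf _ = rayOf v; rw [hx, hw]⟩
  rcases hSP with ⟨i, k, hik, (hveq | hveq)⟩ | ⟨i, hveq⟩ | ⟨i, hveq⟩
  · -- minus
    have hik' : (i : ℕ) < (k : ℕ) := hik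
    have hi1 : (i : ℕ) ≤ 1 := by
      have hx : ∀ x : Fin n, v x ≠ 0 → x = i ∨ x = k := by
        intro x hx
        exact pairix i k x hik (Or.inl (by rwa [← hveq]))
      rcases hv0 with h | h
      · rcases hx Z h with rfl | rfl <;> omega
      · rcases hx O h with rfl | rfl <;> omega
    refine cover v rfl ?_
    by_cases hk1 : (k : ℕ) ≤ 1
    · refine ⟨Sum.inl false, ?_⟩
      rw [hveq]
      simp only [g0, cond_false]
      congr 1
      · exact congrArg (ee n) (Fin.ext (show 0 = (i : ℕ) by omega))
      · exact congrArg (ee n) (Fin.ext (show 1 = (k : ℕ) by omega))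
    · refine ⟨Sum.inr (Sum.inr (false, decide ((i : ℕ) = 1),
        ⟨(k : ℕ) - 2, by have := k.isLt; omega⟩)), ?_⟩
      rw [hveq]
      simp only [g0, cond_false]
      congr 1
      · by_cases hi0 : (i : ℕ) = 1
        · rw [decide_eq_true hi0]
          simp only [cond_true]
          exact congrArg (ee n) (Fin.ext (show 1 = (i : ℕ) by omega))
        · rw [decide_eq_false hi0]
          simp only [cond_false]
          exact congrArg (ee n) (Fin.ext (show 0 = (i : ℕ) by omega))
      · exact congrArg (ee n) (Fin.ext (show (k : ℕ) - 2 + 2 = (k : ℕ) by omega))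
  · -- plus
    have hik' : (i : ℕ) < (k : ℕ) := hik
    have hi1 : (i : ℕ) ≤ 1 := by
      have hx : ∀ x : Fin n, v x ≠ 0 → x = i ∨ x = k := by
        intro x hx
        exact pairix i k x hik (Or.inr (by rwa [← hveq]))
      rcases hv0 with h | h
      · rcases hx Z h with rfl | rfl <;> omega
      · rcases hx O h with rfl | rfl <;> omega
    refine cover v rfl ?_
    by_cases hk1 : (k : ℕ) ≤ 1
    · refine ⟨Sum.inl true, ?_⟩
      rw [hveq]
      simp only [g0, cond_true]
      congr 1
      · exact congrArg (ee n) (Fin.ext (show 0 = (i : ℕ) by omega))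
      · exact congrArg (ee n) (Fin.ext (show 1 = (k : ℕ) by omega))
    · refine ⟨Sum.inr (Sum.inr (true, decide ((i : ℕ) = 1),
        ⟨(k : ℕ) - 2, by have := k.isLt; omega⟩)), ?_⟩
      rw [hveq]
      simp only [g0, cond_true]
      congr 1
      · by_cases hi0 : (i : ℕ) = 1
        · rw [decide_eq_true hi0]
          simp only [cond_true]
          exact congrArg (ee n) (Fin.ext (show 1 = (i : ℕ) by omega))
        · rw [decide_eq_false hi0]
          simp only [cond_false]
          exact congrArg (ee n) (Fin.ext (show 0 = (i : ℕ) by omega))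
      · exact congrArg (ee n) (Fin.ext (show (k : ℕ) - 2 + 2 = (k : ℕ) by omega))
  · -- single
    have hi : (i : ℕ) = 0 ∨ (i : ℕ) = 1 := by
      rcases hv0 with h | h
      · left
        by_contra hiZ
        rw [hveq, ee_apply, if_neg (fun hh : Z = i => hiZ (by rw [← hh, hZ]))] at h
        exact h rfl
      · right
        by_contra hiO
        rw [hveq, ee_apply, if_neg (fun hh : O = i => hiO (by rw [← hh, hO]))] at h
        exact h rfl
    refine cover v rfl ?_
    rcases hi with hival | hival
    · exact ⟨Sum.inr (Sum.inl false), by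
        rw [hveq]
        simp only [g0, cond_false]
        exact congrArg (ee n) (Fin.ext (show 0 = (i : ℕ) by omega))⟩
    · exact ⟨Sum.inr (Sum.inl true), by
        rw [hveq]
        simp only [g0, cond_true]
        exact congrArg (ee n) (Fin.ext (show 1 = (i : ℕ) by omega))⟩
  · -- double
    have hi : (i : ℕ) = 0 ∨ (i : ℕ) = 1 := by
      rcases hv0 with h | h
      · left
        by_contra hiZ
        rw [hveq] at h
        simp only [Pi.smul_apply, smul_eq_mul, ee_apply,
          if_neg (fun hh : Z = i => hiZ (by rw [← hh, hZ]))] at h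
        exact h (by norm_num)
      · right
        by_contra hiO
        rw [hveq] at h
        simp only [Pi.smul_apply, smul_eq_mul, ee_apply,
          if_neg (fun hh : O = i => hiO (by rw [← hh, hO]))] at h
        exact h (by norm_num)
    have hray : rayOf v = rayOf (ee n i) := by
      rw [hveq]
      exact rayOf_two_smul _
    refine cover (ee n i) hray ?_
    rcases hi with hival | hival
    · exact ⟨Sum.inr (Sum.inl false), by
        simp only [g0, cond_false]
        exact congrArg (ee n) (Fin.ext (show 0 = (i : ℕ) by omega))⟩
    · exact ⟨Sum.inr (Sum.inl true), by
        simp only [g0, cond_true]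
        exact congrArg (ee n) (Fin.ext (show 1 = (i : ℕ) by omega))⟩

lemma upper_bound (hn : 2 ≤ n) {Z O : Fin n} (hZ : (Z : ℕ) = 0) (hO : (O : ℕ) = 1) :
    crcOf n (Set.range (alp n) \ {alp n Z, alp n O}) ≤ 4 * n - 4 := by
  rw [crcOf_eq]
  calc (RaysOf n _).ncard ≤ (Set.range (fun x => rayOf (g0 n hn x))).ncard := by
        refine Set.ncard_le_ncard (upper_cover hn hZ hO) ?_
        exact Set.finite_range _
    _ ≤ (Set.univ : Set (J0 n)).ncard := by
        rw [← Set.image_univ]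
        exact Set.ncard_image_le Set.finite_univ
    _ = Nat.card (J0 n) := Set.ncard_univ _
    _ = 4 * n - 4 := card_J0 hn


/-- In the non-reduced root system of type `BC_n` (`n ≥ 2`), the minimum over unordered pairs
of distinct simple roots `{α_i, α_j}` of the coarse resonant codimension of `Π \ {α_i, α_j}`
(counting positive-proportionality classes of excluded positive roots) equals `4n - 4`. -/
theorem stmt9 (n : ℕ) (hn : 2 ≤ n) :
    let e : Fin n → (Fin n → ℝ) := fun i => Pi.single i 1
    let Sp : Set (Fin n → ℝ) :=
      {v | (∃ i j : Fin n, i < j ∧ (v = e i - e j ∨ v = e i + e j)) ∨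
        (∃ i : Fin n, v = e i) ∨ ∃ i : Fin n, v = (2 : ℝ) • e i}
    let α : Fin n → (Fin n → ℝ) := fun k =>
      if h : (k : ℕ) + 1 < n then e k - e ⟨(k : ℕ) + 1, h⟩ else e k
    let crc : Set (Fin n → ℝ) → ℕ := fun Pi' =>
      Set.ncard {R : Set (Fin n → ℝ) | ∃ v, (v ∈ Sp ∧ v ∉ Submodule.span ℝ Pi') ∧
        R = {w | ∃ c : ℝ, 0 < c ∧ w = c • v}}
    (⨅ p : {p : Fin n × Fin n // p.1 ≠ p.2},
      crc (Set.range α \ {α p.val.1, α p.val.2})) = 4 * n - 4 := by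
  intro e Sp α crc
  show (⨅ p : {p : Fin n × Fin n // p.1 ≠ p.2},
      crc (Set.range (alp n) \ {alp n p.val.1, alp n p.val.2})) = 4 * n - 4
  have hc : ∀ P : Set (Fin n → ℝ), crc P = crcOf n P := fun P => rfl
  simp only [hc]
  have hZO : (⟨0, by omega⟩ : Fin n) ≠ (⟨1, by omega⟩ : Fin n) :=
    Fin.ne_of_val_ne (show (0 : ℕ) ≠ (1 : ℕ) by omega)
  apply le_antisymm
  · refine le_trans (Nat.sInf_le ⟨⟨(⟨0, by omega⟩, ⟨1, by omega⟩), hZO⟩, rfl⟩)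
      (upper_bound hn rfl rfl)
  · refine le_csInf ⟨_, ⟨⟨(⟨0, by omega⟩, ⟨1, by omega⟩), hZO⟩, rfl⟩⟩ ?_
    rintro b ⟨⟨⟨x, y⟩, hxy⟩, rfl⟩
    show 4 * n - 4 ≤ crcOf n (Set.range (alp n) \ {alp n x, alp n y})
    rcases lt_or_gt_of_ne hxy with h | h
    · exact lower_bound h
    · rw [Set.pair_comm (alp n x) (alp n y)]
      exact lower_bound h
end

section
/- Let n ≥ 5. In the root system of type D_n, the minimum, over unordered pairs {α_i, α_j} of distinct simple roots in Π, of the resonant codimension of Π ∖ {α_i, α_j} equals 4n − 6. -/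
/-!
Simple roots are indexed from `0`, as in the statement: `α_k = e_k - e_{k+1}` for `k < n - 1` and
`α_{n-1} = e_{n-2} + e_{n-1}`. The `n(n-1)` positive roots `e_a ± e_b` (`a < b`) are indexed by
`((a, b), sign)`. At most `(n-2)(n-3)` of them lie in `span (Π \ {α_i, α_j})`, with equality for
`{α_0, α_1}`, so the minimum is `n(n-1) - (n-2)(n-3) = 4n - 6`.

A root lies outside that span as soon as some integral coweight `f` vanishing on
`Π \ {α_i, α_j}` pairs nontrivially with it. For `i < j` take `f = [· ≤ i] + [· ≤ j]`; when
`j = n - 2`, take instead `[· ≤ i] + [· ≤ n - 1]` with the sign of its last coordinate flipped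
(the diagram automorphism exchanging `α_{n-2}` and `α_{n-1}`). Then `|f|` takes the values
`2, 1, 0` on consecutive blocks of sizes `a, b, c` with `c ≠ 1`, and `f` kills only roots
`e_s ± e_t` with `|f s| = |f t|`, both signs only when `f s = f t = 0`: at most
`C(a,2) + C(b,2) + 2 C(c,2) ≤ (n-2)(n-3)` roots, because `n ≥ 5`.

For `{α_0, α_1}`, the remaining simple roots span `e_{n-1} = (α_{n-1} - α_{n-2}) / 2` and then
`e_k = α_k + e_{k+1}` for `k ≥ 2`, hence all `(n-2)(n-3)` roots supported on `e_2, …, e_{n-1}`.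
-/

open Finset

namespace TypeD

variable {n : ℕ}

def posRootIdx (n : ℕ) : Finset ((Fin n × Fin n) × Bool) :=
  ({p : Fin n × Fin n | p.1 < p.2} : Finset _) ×ˢ (univ : Finset Bool)

def root (x : (Fin n × Fin n) × Bool) : Fin n → ℝ :=
  if x.2 then Pi.single x.1.1 1 + Pi.single x.1.2 1 else Pi.single x.1.1 1 - Pi.single x.1.2 1

def simpleRootIdx (k : Fin n) : (Fin n × Fin n) × Bool :=
  if h : (k : ℕ) + 1 < n then ((k, ⟨k + 1, h⟩), false)
  else ((⟨n - 2, by omega⟩, ⟨n - 1, by omega⟩), true)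

def simpleRoot (k : Fin n) : Fin n → ℝ := root (simpleRootIdx k)

@[simp] lemma mem_posRootIdx {x : (Fin n × Fin n) × Bool} :
    x ∈ posRootIdx n ↔ x.1.1 < x.1.2 := by
  simp [posRootIdx]

lemma card_posRootIdx : #(posRootIdx n) = 2 * n.choose 2 := by
  rw [posRootIdx, card_product, Fintype.card_product_filter_lt]
  simp [mul_comm]

lemma root_apply_fst {x : (Fin n × Fin n) × Bool} (h : x.1.1 ≠ x.1.2) : root x x.1.1 = 1 := by
  unfold root; split_ifs <;> simp [h]

lemma root_apply_snd {x : (Fin n × Fin n) × Bool} (h : x.1.1 ≠ x.1.2) :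
    root x x.1.2 = if x.2 then 1 else -1 := by
  unfold root; split_ifs <;> simp [Ne.symm h]

lemma root_apply_of_ne {x : (Fin n × Fin n) × Bool} {t : Fin n} (h₁ : t ≠ x.1.1)
    (h₂ : t ≠ x.1.2) : root x t = 0 := by
  unfold root; split_ifs <;> simp [h₁, h₂]

lemma root_injOn : Set.InjOn root (posRootIdx n : Set ((Fin n × Fin n) × Bool)) := by
  have fst_mem : ∀ {x y}, x ∈ posRootIdx n → root x = root y →
      x.1.1 = y.1.1 ∨ x.1.1 = y.1.2 := by
    intro x y hx h
    by_contra! hne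
    have := congrFun h x.1.1
    rw [root_apply_fst (mem_posRootIdx.1 hx).ne, root_apply_of_ne hne.1 hne.2] at this
    exact one_ne_zero this
  rintro ⟨⟨a, b⟩, σ⟩ hx ⟨⟨c, d⟩, τ⟩ hy h
  have hab : a < b := mem_posRootIdx.1 hx
  have hcd : c < d := mem_posRootIdx.1 hy
  have hac : a = c := by
    have h₁ : a = c ∨ a = d := fst_mem hx h
    have h₂ : c = a ∨ c = b := fst_mem hy h.symm
    omega
  subst hac
  have hb := congrFun h b
  rw [root_apply_snd (x := ((a, b), σ)) hab.ne] at hb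
  have hbd : b = d := by
    by_contra hbd
    rw [root_apply_of_ne (x := ((a, d), τ)) hab.ne' hbd] at hb
    cases σ <;> norm_num at hb
  subst hbd
  rw [root_apply_snd (x := ((a, b), τ)) hab.ne] at hb
  cases σ <;> cases τ <;> first | rfl | norm_num at hb

lemma image_root_posRootIdx : root '' (posRootIdx n : Set ((Fin n × Fin n) × Bool)) =
    {v | ∃ i j : Fin n, i < j ∧
      (v = Pi.single i 1 - Pi.single j 1 ∨ v = Pi.single i 1 + Pi.single j 1)} := by
  ext v
  constructor
  · rintro ⟨⟨⟨a, b⟩, σ⟩, hab, rfl⟩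
    cases σ
    · exact ⟨a, b, mem_posRootIdx.1 hab, Or.inl rfl⟩
    · exact ⟨a, b, mem_posRootIdx.1 hab, Or.inr rfl⟩
  · rintro ⟨a, b, hab, rfl | rfl⟩
    · exact ⟨((a, b), false), mem_posRootIdx.2 hab, rfl⟩
    · exact ⟨((a, b), true), mem_posRootIdx.2 hab, rfl⟩

open Classical in
lemma ncard_image_root_notMem (W : Submodule ℝ (Fin n → ℝ)) :
    {v | v ∈ root '' (posRootIdx n : Set ((Fin n × Fin n) × Bool)) ∧ v ∉ W}.ncard =
      #{x ∈ posRootIdx n | root x ∉ W} := by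
  have : {v | v ∈ root '' (posRootIdx n : Set ((Fin n × Fin n) × Bool)) ∧ v ∉ W} =
      root '' ({x ∈ posRootIdx n | root x ∉ W} : Finset _) := by
    ext v
    simp only [Set.mem_image, coe_filter]
    constructor
    · rintro ⟨⟨x, hx, rfl⟩, hW⟩
      exact ⟨x, ⟨hx, hW⟩, rfl⟩
    · rintro ⟨x, ⟨hx, hW⟩, rfl⟩
      exact ⟨⟨x, hx, rfl⟩, hW⟩
  rw [this, (root_injOn.mono (coe_subset.2 (filter_subset _ _))).ncard_image,
    Set.ncard_coe_finset]

lemma simpleRootIdx_mem_posRootIdx (hn : 2 ≤ n) (k : Fin n) :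
    simpleRootIdx k ∈ posRootIdx n := by
  unfold simpleRootIdx
  split_ifs <;> simp only [mem_posRootIdx, Fin.lt_def] <;> omega

lemma simpleRoot_of_lt {k : Fin n} (hk : (k : ℕ) + 1 < n) :
    simpleRoot k = Pi.single k 1 - Pi.single ⟨k + 1, hk⟩ 1 := by
  simp only [simpleRoot, simpleRootIdx, dif_pos hk]; rfl

lemma simpleRoot_of_not_lt {k : Fin n} (hk : ¬(k : ℕ) + 1 < n) :
    simpleRoot k = Pi.single ⟨n - 2, by omega⟩ 1 + Pi.single ⟨n - 1, by omega⟩ 1 := by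
  simp only [simpleRoot, simpleRootIdx, dif_neg hk]; rfl

section Minimizer

lemma simpleRoot_mem_range_diff (hn : 4 ≤ n) {k : Fin n} (hk : 2 ≤ (k : ℕ)) :
    simpleRoot k ∈
      Set.range simpleRoot \ {simpleRoot ⟨0, by omega⟩, simpleRoot ⟨1, by omega⟩} := by
  have hne : ∀ l : Fin n, (l : ℕ) ≤ 1 → simpleRoot k ≠ simpleRoot l := fun l hl h => by
    have := congrArg (fun x => (x.1.1 : ℕ))
      (root_injOn (simpleRootIdx_mem_posRootIdx (by omega) k)
        (simpleRootIdx_mem_posRootIdx (by omega) l) h)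
    simp only [simpleRootIdx] at this
    split_ifs at this <;> simp only at this <;> omega
  refine ⟨⟨k, rfl⟩, ?_⟩
  rintro (h | h)
  · exact hne _ (by simp) h
  · exact hne _ (by simp) h

lemma single_mem_span (hn : 4 ≤ n) {t : Fin n} (ht : 2 ≤ (t : ℕ)) :
    Pi.single t (1 : ℝ) ∈ Submodule.span ℝ
      (Set.range simpleRoot \ {simpleRoot ⟨0, by omega⟩, simpleRoot ⟨1, by omega⟩}) := by
  set W := Submodule.span ℝ (Set.range simpleRoot \
    {simpleRoot (⟨0, by omega⟩ : Fin n), simpleRoot (⟨1, by omega⟩ : Fin n)})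
  have hsimple : ∀ k : Fin n, 2 ≤ (k : ℕ) → simpleRoot k ∈ W := fun k hk =>
    Submodule.subset_span (simpleRoot_mem_range_diff hn hk)
  have hlast : Pi.single ⟨n - 1, by omega⟩ (1 : ℝ) ∈ W := by
    have h := W.smul_mem (2⁻¹ : ℝ)
      (W.sub_mem (hsimple ⟨n - 1, by omega⟩ (by dsimp only; omega))
        (hsimple ⟨n - 2, by omega⟩ (by dsimp only; omega)))
    rw [simpleRoot_of_not_lt (by dsimp only; omega), simpleRoot_of_lt (by dsimp only; omega)]
      at h
    convert h using 1
    rw [show (⟨n - 2 + 1, by omega⟩ : Fin n) = ⟨n - 1, by omega⟩ by ext; dsimp only; omega]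
    module
  obtain ⟨t, htn⟩ := t
  dsimp only at ht
  refine Nat.decreasingInduction'
    (P := fun m => ∀ h : m < n, Pi.single ⟨m, h⟩ (1 : ℝ) ∈ W) (fun k hk htk ih h => ?_)
    (show t ≤ n - 1 by omega) (fun _ => hlast) htn
  have := W.add_mem (hsimple ⟨k, h⟩ (by dsimp only; omega)) (ih (by omega))
  rwa [simpleRoot_of_lt (show k + 1 < n by omega), sub_add_cancel] at this

open Classical in
lemma le_card_root_mem_span (hn : 4 ≤ n) :
    2 * (n - 2).choose 2 ≤ #{x ∈ posRootIdx n | root x ∈ Submodule.span ℝ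
      (Set.range simpleRoot \ {simpleRoot ⟨0, by omega⟩, simpleRoot ⟨1, by omega⟩})} := by
  set s : Finset (Fin n) := Ici ⟨2, by omega⟩
  calc 2 * (n - 2).choose 2 = #({p ∈ s ×ˢ s | p.1 < p.2} ×ˢ (univ : Finset Bool)) := by
        rw [card_product, card_product_filter_lt, Fin.card_Ici, card_univ, Fintype.card_bool,
          mul_comm]
    _ ≤ _ := by
        refine card_le_card fun x => ?_
        simp only [s, mem_product, mem_filter, mem_Ici, mem_univ, and_true, mem_posRootIdx]
        rintro ⟨⟨ha, hb⟩, hab⟩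
        refine ⟨hab, ?_⟩
        have ha' := single_mem_span hn (t := x.1.1) (by simpa [Fin.le_def] using ha)
        have hb' := single_mem_span hn (t := x.1.2) (by simpa [Fin.le_def] using hb)
        unfold root
        split_ifs
        · exact Submodule.add_mem _ ha' hb'
        · exact Submodule.sub_mem _ ha' hb'

end Minimizer

section LowerBound

def pairing (f : Fin n → ℤ) (x : (Fin n × Fin n) × Bool) : ℤ :=
  f x.1.1 + if x.2 then f x.1.2 else -f x.1.2

lemma dotProduct_root (f : Fin n → ℤ) (x : (Fin n × Fin n) × Bool) :
    (fun t => (f t : ℝ)) ⬝ᵥ root x = pairing f x := by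
  unfold root pairing
  split_ifs <;> simp [dotProduct_add, sub_eq_add_neg]

lemma root_notMem_span_of_pairing_ne_zero (f : Fin n → ℤ) {S : Set (Fin n → ℝ)}
    (hS : ∀ v ∈ S, (fun t => (f t : ℝ)) ⬝ᵥ v = 0) {x : (Fin n × Fin n) × Bool}
    (hx : pairing f x ≠ 0) : root x ∉ Submodule.span ℝ S := by
  have hker : Submodule.span ℝ S ≤
      LinearMap.ker (dotProductEquiv ℝ (Fin n) fun t => (f t : ℝ)) :=
    Submodule.span_le.2 fun v hv => by simpa using hS v hv
  intro hmem
  have := hker hmem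
  simp only [LinearMap.mem_ker, dotProductEquiv_apply_apply, dotProduct_root] at this
  exact hx (by exact_mod_cast this)

open Classical in
lemma card_root_mem_span_le_card_pairing_eq_zero {f : Fin n → ℤ} {i j : Fin n}
    (hf : ∀ k, k ≠ i → k ≠ j → pairing f (simpleRootIdx k) = 0) :
    #{x ∈ posRootIdx n |
        root x ∈ Submodule.span ℝ (Set.range simpleRoot \ {simpleRoot i, simpleRoot j})} ≤
      #{x ∈ posRootIdx n | pairing f x = 0} := by
  have hS : ∀ v ∈ Set.range simpleRoot \ {simpleRoot i, simpleRoot j},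
      (fun t => (f t : ℝ)) ⬝ᵥ v = 0 := by
    rintro _ ⟨⟨k, rfl⟩, hk⟩
    simp only [Set.mem_insert_iff, Set.mem_singleton_iff, not_or] at hk
    rw [simpleRoot, dotProduct_root,
      hf k (by rintro rfl; exact hk.1 rfl) (by rintro rfl; exact hk.2 rfl), Int.cast_zero]
  refine card_le_card fun x => ?_
  simp only [mem_filter]
  exact fun ⟨hx, hspan⟩ =>
    ⟨hx, not_not.1 fun h => root_notMem_span_of_pairing_ne_zero f hS h hspan⟩

lemma card_filter_product_bool {α : Type*} (s : Finset α) (Q : α × Bool → Prop)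
    [DecidablePred Q] :
    #{x ∈ s ×ˢ (univ : Finset Bool) | Q x} =
      #{a ∈ s | Q (a, true)} + #{a ∈ s | Q (a, false)} := by
  simp only [card_filter, sum_product, Fintype.sum_bool, sum_add_distrib]

lemma card_pairing_eq_zero_le (f : Fin n → ℤ) :
    #{x ∈ posRootIdx n | pairing f x = 0} ≤
      #{p : Fin n × Fin n | p.1 < p.2 ∧ |f p.1| = |f p.2|} +
        #{p : Fin n × Fin n | p.1 < p.2 ∧ f p.1 = 0 ∧ f p.2 = 0} := by
  have hsplit : #{x ∈ posRootIdx n | pairing f x = 0} =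
      #{p : Fin n × Fin n | p.1 < p.2 ∧ f p.1 + f p.2 = 0} +
        #{p : Fin n × Fin n | p.1 < p.2 ∧ f p.1 = f p.2} := by
    rw [posRootIdx, card_filter_product_bool]
    simp only [pairing, if_true, Bool.false_eq_true, if_false, ← sub_eq_add_neg, sub_eq_zero,
      filter_filter]
  rw [hsplit, ← card_union_add_card_inter]
  gcongr
  · intro p
    simp only [mem_union, mem_filter_univ]
    rintro (⟨h, h'⟩ | ⟨h, h'⟩) <;> refine ⟨h, ?_⟩ <;> rw [abs_eq_abs] <;> omega
  · intro p
    simp only [mem_inter, mem_filter_univ]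
    omega

def twoStep (i j : Fin n) (t : Fin n) : ℤ :=
  (if t ≤ i then 1 else 0) + (if t ≤ j then 1 else 0)

def flipLast (f : Fin n → ℤ) (t : Fin n) : ℤ := if (t : ℕ) + 1 = n then -f t else f t

lemma abs_twoStep (i j t : Fin n) : |twoStep i j t| = twoStep i j t :=
  abs_of_nonneg (by unfold twoStep; split_ifs <;> norm_num)

lemma abs_flipLast (f : Fin n → ℤ) (t : Fin n) : |flipLast f t| = |f t| := by
  unfold flipLast; split_ifs <;> simp

lemma pairing_twoStep_simpleRootIdx_eq_zero {i j k : Fin n} (hij : i < j)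
    (hj : (j : ℕ) + 2 ≠ n) (hki : k ≠ i) (hkj : k ≠ j) :
    pairing (twoStep i j) (simpleRootIdx k) = 0 := by
  unfold simpleRootIdx
  split_ifs <;> simp only [pairing, twoStep, Fin.le_iff_val_le_val, if_true, Bool.false_eq_true,
    if_false] <;> split_ifs <;> omega

lemma pairing_flipLast_twoStep_simpleRootIdx_eq_zero {i k : Fin n} (hi : (i : ℕ) + 2 < n)
    (hki : k ≠ i) (hk : (k : ℕ) + 2 ≠ n) :
    pairing (flipLast (twoStep i ⟨n - 1, by omega⟩)) (simpleRootIdx k) = 0 := by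
  unfold simpleRootIdx
  split_ifs <;> simp only [pairing, flipLast, twoStep, Fin.le_iff_val_le_val, if_true,
    Bool.false_eq_true, if_false] <;> split_ifs <;> omega

lemma card_pairs_twoStep_eq_le {i j : Fin n} (hij : i < j) :
    #{p : Fin n × Fin n | p.1 < p.2 ∧ twoStep i j p.1 = twoStep i j p.2} ≤
      (i + 1 : ℕ).choose 2 + (j - i : ℕ).choose 2 + (n - 1 - j : ℕ).choose 2 := by
  calc _ ≤ #({p ∈ Iic i ×ˢ Iic i | p.1 < p.2} ∪ {p ∈ Ioc i j ×ˢ Ioc i j | p.1 < p.2} ∪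
        {p ∈ Ioi j ×ˢ Ioi j | p.1 < p.2}) := by
        refine card_le_card fun p => ?_
        simp only [mem_filter, mem_union, mem_product, mem_Iic, mem_Ioc, mem_Ioi]
        unfold twoStep
        split_ifs <;> omega
    _ ≤ _ := by
        refine (card_union_le _ _).trans (add_le_add (card_union_le _ _) le_rfl) |>.trans_eq ?_
        rw [card_product_filter_lt, card_product_filter_lt, card_product_filter_lt,
          Fin.card_Iic, Fin.card_Ioc, Fin.card_Ioi]

lemma card_pairs_twoStep_eq_zero_le (i j : Fin n) :
    #{p : Fin n × Fin n | p.1 < p.2 ∧ twoStep i j p.1 = 0 ∧ twoStep i j p.2 = 0} ≤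
      (n - 1 - j : ℕ).choose 2 := by
  calc _ ≤ #{p ∈ Ioi j ×ˢ Ioi j | p.1 < p.2} := by
        refine card_le_card fun p => ?_
        simp only [mem_filter, mem_product, mem_Ioi]
        unfold twoStep
        split_ifs <;> omega
    _ = _ := by rw [card_product_filter_lt, Fin.card_Ioi]

lemma choose_two_add_le {a b c : ℕ} (ha : 1 ≤ a) (hb : 1 ≤ b) (hc : c ≠ 1)
    (h : 5 ≤ a + b + c) :
    a.choose 2 + b.choose 2 + 2 * c.choose 2 ≤ 2 * (a + b + c - 2).choose 2 := by
  rw [← Nat.cast_le (α := ℚ)]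
  push_cast [Nat.cast_choose_two, Nat.cast_sub (by omega : 2 ≤ a + b + c)]
  have ha' : (1 : ℚ) ≤ a := by exact_mod_cast ha
  have hb' : (1 : ℚ) ≤ b := by exact_mod_cast hb
  have hab : (0 : ℚ) ≤ (a - 1) * (b - 1) := mul_nonneg (by linarith) (by linarith)
  rcases Nat.eq_zero_or_pos c with rfl | hc0
  · have h' : (5 : ℚ) ≤ a + b := by exact_mod_cast h
    push_cast
    nlinarith [mul_nonneg (by linarith : (0 : ℚ) ≤ a + b - 2)
      (by linarith : (0 : ℚ) ≤ a + b - 5)]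
  · have hc' : (2 : ℚ) ≤ c := by exact_mod_cast (by omega : 2 ≤ c)
    nlinarith [mul_nonneg (by linarith : (0 : ℚ) ≤ a + b - 2)
      (by linarith : (0 : ℚ) ≤ a + b - 5 + 4 * c)]

lemma card_pairing_eq_zero_le_of_abs_eq_twoStep (hn : 5 ≤ n) {f : Fin n → ℤ} {i j : Fin n}
    (hij : i < j) (hj : (j : ℕ) + 2 ≠ n) (hf : ∀ t, |f t| = twoStep i j t) :
    #{x ∈ posRootIdx n | pairing f x = 0} ≤ 2 * (n - 2).choose 2 := by
  have hzero : ∀ t, f t = 0 ↔ twoStep i j t = 0 := fun t => by rw [← hf, abs_eq_zero]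
  have hpairs := card_pairing_eq_zero_le f
  simp only [hf, hzero] at hpairs
  have := card_pairs_twoStep_eq_le hij
  have := card_pairs_twoStep_eq_zero_le i j
  have := choose_two_add_le (a := i + 1) (b := j - i) (c := n - 1 - j) (by omega) (by omega)
    (by omega) (by omega)
  rw [show (i : ℕ) + 1 + (j - i) + (n - 1 - j) - 2 = n - 2 by omega] at this
  omega

open Classical in
lemma card_root_mem_span_le (hn : 5 ≤ n) {i j : Fin n} (hij : i ≠ j) :
    #{x ∈ posRootIdx n |
        root x ∈ Submodule.span ℝ (Set.range simpleRoot \ {simpleRoot i, simpleRoot j})} ≤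
      2 * (n - 2).choose 2 := by
  wlog hlt : i < j generalizing i j
  · rw [Set.pair_comm]
    exact this hij.symm (lt_of_le_of_ne (not_lt.1 hlt) hij.symm)
  by_cases hj : (j : ℕ) + 2 = n
  · refine (card_root_mem_span_le_card_pairing_eq_zero fun k hki hkj =>
      pairing_flipLast_twoStep_simpleRootIdx_eq_zero (by omega) hki (by omega)).trans ?_
    exact card_pairing_eq_zero_le_of_abs_eq_twoStep hn (i := i) (j := ⟨n - 1, by omega⟩)
      (by simp only [Fin.lt_def]; omega) (by dsimp only; omega)
      fun t => by rw [abs_flipLast, abs_twoStep]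
  · exact (card_root_mem_span_le_card_pairing_eq_zero fun k hki hkj =>
      pairing_twoStep_simpleRootIdx_eq_zero hlt hj hki hkj).trans
      (card_pairing_eq_zero_le_of_abs_eq_twoStep hn hlt hj (abs_twoStep i j))

end LowerBound

lemma two_mul_choose_two_eq (hn : 2 ≤ n) :
    2 * n.choose 2 = 2 * (n - 2).choose 2 + (4 * n - 6) := by
  obtain ⟨m, rfl⟩ := Nat.exists_eq_add_of_le' hn
  have h₁ : (m + 2).choose 2 = (m + 1).choose 1 + (m + 1).choose 2 := Nat.choose_succ_succ' _ _
  have h₂ : (m + 1).choose 2 = m.choose 1 + m.choose 2 := Nat.choose_succ_succ' _ _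
  rw [Nat.add_sub_cancel, h₁, h₂, Nat.choose_one_right, Nat.choose_one_right]
  omega

end TypeD

/-- In the root system of type `D_n` (`n ≥ 5`), the minimum over unordered pairs of distinct
simple roots `{α_i, α_j}` of the resonant codimension of `Π \ {α_i, α_j}` equals `4n - 6`. -/
theorem stmt11 (n : ℕ) (hn : 5 ≤ n) :
    let e : Fin n → (Fin n → ℝ) := fun i => Pi.single i 1
    let Sp : Set (Fin n → ℝ) :=
      {v | ∃ i j : Fin n, i < j ∧ (v = e i - e j ∨ v = e i + e j)}
    let α : Fin n → (Fin n → ℝ) := fun k =>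
      if h : (k : ℕ) + 1 < n then e k - e ⟨(k : ℕ) + 1, h⟩
      else e ⟨n - 2, by omega⟩ + e ⟨n - 1, by omega⟩
    let rc : Set (Fin n → ℝ) → ℕ := fun Pi' =>
      Set.ncard {v | v ∈ Sp ∧ v ∉ Submodule.span ℝ Pi'}
    (⨅ p : {p : Fin n × Fin n // p.1 ≠ p.2},
      rc (Set.range α \ {α p.val.1, α p.val.2})) = 4 * n - 6 := by
  classical
  intro e Sp α rc
  have hα : α = TypeD.simpleRoot := by
    funext k
    simp only [α, TypeD.simpleRoot, TypeD.simpleRootIdx]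
    split_ifs <;> rfl
  have hrc : ∀ i j : Fin n, rc (Set.range α \ {α i, α j}) +
      #{x ∈ TypeD.posRootIdx n | TypeD.root x ∈ Submodule.span ℝ
        (Set.range TypeD.simpleRoot \ {TypeD.simpleRoot i, TypeD.simpleRoot j})} =
      2 * n.choose 2 := by
    intro i j
    simp only [rc, Sp, e, hα, ← TypeD.image_root_posRootIdx, TypeD.ncard_image_root_notMem]
    rw [← TypeD.card_posRootIdx, add_comm]
    exact card_filter_add_card_filter_not _
  have hchoose := TypeD.two_mul_choose_two_eq (n := n) (by omega)
  have h01 : (⟨0, by omega⟩ : Fin n) ≠ ⟨1, by omega⟩ := by simp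
  have : Nonempty {p : Fin n × Fin n // p.1 ≠ p.2} := ⟨⟨(_, _), h01⟩⟩
  apply le_antisymm
  · refine (ciInf_le' _ ⟨(_, _), h01⟩).trans ?_
    dsimp only
    have := hrc ⟨0, by omega⟩ ⟨1, by omega⟩
    have := TypeD.le_card_root_mem_span (n := n) (by omega)
    omega
  · refine le_ciInf fun p => ?_
    have := hrc p.1.1 p.1.2
    have := TypeD.card_root_mem_span_le hn p.2
    omega
end

section
/- Let Σ be an irreducible (possibly non-reduced) crystallographic root system of rank at least 2 in a finite-dimensional real inner product space V, with base Π. Fix α ∈ Π, and let β ∈ Σ be a negative root whose α-coefficient is nonzero. Then there exists a root γ ∈ Σ such that: (i) γ is not of the form −cβ for any real c > 0; (ii) γ is either a positive root or has zero α-coefficient (equivalently, γ lies in span_ℝ(Π ∖ {α})); (iii) β + γ ∈ Σ; and (iv) β + γ is a negative root whose α-coefficient is nonzero. -/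
/-!
If some root `x` with zero `i₀`-coefficient is not orthogonal to `β`, then `γ = ±x` has
`⟪β, γ⟫ < 0`, so `β + γ` is a root with the same `i₀`-coefficient as `β`. Otherwise `β` is
orthogonal to every simple root but `b i₀`, so `⟪x, β⟫` is proportional to the `i₀`-coefficient
of `x`. Irreducibility gives a root `x` neither proportional nor orthogonal to `β`; as Cartan
numbers of non-proportional roots lie in `[-3, 3]`, after replacing `x` by `-x` and possibly by
`x + β` its Cartan number against `β` is `-1` or `-2`. In the first case `x` has `i₀`-coefficient
`-β_{i₀}/2 > 0`, so it is positive, and `γ = x` works; in the second `γ = β + x` has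
`i₀`-coefficient `0` and `β + γ = s_β x` is a root.
-/

open scoped RealInnerProductSpace

section

variable {V : Type*} [NormedAddCommGroup V] [InnerProductSpace ℝ V]

noncomputable def cartanNumber (x y : V) : ℝ := 2 * ⟪x, y⟫ / ⟪y, y⟫

theorem cartanNumber_self {x : V} (hx : x ≠ 0) : cartanNumber x x = 2 := by
  have : ⟪x, x⟫ ≠ 0 := inner_self_ne_zero.2 hx
  unfold cartanNumber
  field_simp

theorem cartanNumber_add_self (x : V) {y : V} (hy : y ≠ 0) :
    cartanNumber (x + y) y = cartanNumber x y + 2 := by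
  have : ⟪y, y⟫ ≠ 0 := inner_self_ne_zero.2 hy
  unfold cartanNumber
  rw [inner_add_left]
  field_simp

theorem cartanNumber_neg_iff {x y : V} (hy : y ≠ 0) : cartanNumber x y < 0 ↔ ⟪x, y⟫ < 0 := by
  unfold cartanNumber
  rw [div_lt_iff₀ (real_inner_self_pos.2 hy), zero_mul]
  constructor <;> intro h <;> linarith

theorem real_inner_mul_inner_self_lt {x y : V} (hx : x ≠ 0) (hy : y ≠ 0)
    (hxy : ∀ c : ℝ, x ≠ c • y) : ⟪x, y⟫ * ⟪x, y⟫ < ⟪x, x⟫ * ⟪y, y⟫ := by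
  have hlt : |⟪x, y⟫| < ‖x‖ * ‖y‖ := by
    refine (abs_real_inner_le_norm x y).lt_of_ne fun h => ?_
    rw [real_inner_comm, ← Real.norm_eq_abs, mul_comm] at h
    obtain ⟨c, -, hc⟩ := (norm_inner_eq_norm_iff hy hx).1 h
    exact hxy c hc
  rw [real_inner_self_eq_norm_mul_norm, real_inner_self_eq_norm_mul_norm]
  nlinarith [abs_mul_abs_self ⟪x, y⟫, abs_nonneg ⟪x, y⟫]

theorem cartanNumber_mul_cartanNumber_lt_four {x y : V} (hx : x ≠ 0) (hy : y ≠ 0)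
    (hxy : ∀ c : ℝ, x ≠ c • y) : cartanNumber x y * cartanNumber y x < 4 := by
  have hxx := real_inner_self_pos.2 hx
  have hyy := real_inner_self_pos.2 hy
  unfold cartanNumber
  rw [real_inner_comm x y, div_mul_div_comm, div_lt_iff₀ (by positivity)]
  nlinarith [real_inner_mul_inner_self_lt hx hy hxy]

structure IsCrystallographic (Sig : Set V) : Prop where
  zero_notMem : (0 : V) ∉ Sig
  sub_cartanNumber_smul_mem : ∀ y ∈ Sig, ∀ x ∈ Sig, x - cartanNumber x y • y ∈ Sig
  exists_int_eq_cartanNumber : ∀ y ∈ Sig, ∀ x ∈ Sig, ∃ k : ℤ, (k : ℝ) = cartanNumber x y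

namespace IsCrystallographic

variable {Sig : Set V} {x y : V}

theorem ne_zero (hS : IsCrystallographic Sig) (hx : x ∈ Sig) : x ≠ 0 :=
  fun h => hS.zero_notMem (h ▸ hx)

theorem neg_mem (hS : IsCrystallographic Sig) (hx : x ∈ Sig) : -x ∈ Sig := by
  have h := hS.sub_cartanNumber_smul_mem x hx x hx
  rwa [cartanNumber_self (hS.ne_zero hx), two_smul, sub_add_cancel_left] at h

theorem add_mem_of_cartanNumber_eq_neg_one (hS : IsCrystallographic Sig) (hx : x ∈ Sig)
    (hy : y ∈ Sig) (hxy : cartanNumber x y = -1) : x + y ∈ Sig := by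
  have h := hS.sub_cartanNumber_smul_mem y hy x hx
  rwa [hxy, neg_one_smul, sub_neg_eq_add] at h

theorem add_two_smul_mem_of_cartanNumber_eq_neg_two (hS : IsCrystallographic Sig)
    (hx : x ∈ Sig) (hy : y ∈ Sig) (hxy : cartanNumber x y = -2) : x + (2 : ℝ) • y ∈ Sig := by
  have h := hS.sub_cartanNumber_smul_mem y hy x hx
  rwa [hxy, neg_smul, sub_neg_eq_add] at h

theorem exists_int_cartanNumber_of_inner_neg (hS : IsCrystallographic Sig) (hx : x ∈ Sig)
    (hy : y ∈ Sig) (hxy : ⟪x, y⟫ < 0) (hpar : ∀ c : ℝ, x ≠ c • y) :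
    ∃ k l : ℤ, (k : ℝ) = cartanNumber x y ∧ (l : ℝ) = cartanNumber y x ∧
      k < 0 ∧ l < 0 ∧ k * l < 4 := by
  obtain ⟨k, hk⟩ := hS.exists_int_eq_cartanNumber y hy x hx
  obtain ⟨l, hl⟩ := hS.exists_int_eq_cartanNumber x hx y hy
  have hk0 : (k : ℝ) < 0 := hk ▸ (cartanNumber_neg_iff (hS.ne_zero hy)).2 hxy
  have hl0 : (l : ℝ) < 0 :=
    hl ▸ (cartanNumber_neg_iff (hS.ne_zero hx)).2 (by rwa [real_inner_comm])
  have hkl : (k : ℝ) * l < 4 :=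
    hk ▸ hl ▸ cartanNumber_mul_cartanNumber_lt_four (hS.ne_zero hx) (hS.ne_zero hy) hpar
  exact ⟨k, l, hk, hl, by exact_mod_cast hk0, by exact_mod_cast hl0, by exact_mod_cast hkl⟩

theorem add_mem_of_inner_neg (hS : IsCrystallographic Sig) (hx : x ∈ Sig) (hy : y ∈ Sig)
    (hxy : ⟪x, y⟫ < 0) (hpar : ∀ c : ℝ, x ≠ c • y) : x + y ∈ Sig := by
  obtain ⟨k, l, hk, hl, hk0, hl0, hkl⟩ := hS.exists_int_cartanNumber_of_inner_neg hx hy hxy hpar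
  have : k = -1 ∨ l = -1 := by
    by_contra! h
    nlinarith [show k ≤ -2 by omega, show l ≤ -2 by omega]
  rcases this with rfl | rfl
  · exact hS.add_mem_of_cartanNumber_eq_neg_one hx hy (by simpa using hk.symm)
  · rw [add_comm]
    exact hS.add_mem_of_cartanNumber_eq_neg_one hy hx (by simpa using hl.symm)

theorem cartanNumber_eq_of_inner_neg (hS : IsCrystallographic Sig) (hx : x ∈ Sig)
    (hy : y ∈ Sig) (hxy : ⟪x, y⟫ < 0) (hpar : ∀ c : ℝ, x ≠ c • y) :
    cartanNumber x y = -1 ∨ cartanNumber x y = -2 ∨ cartanNumber x y = -3 := by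
  obtain ⟨k, l, hk, -, hk0, hl0, hkl⟩ := hS.exists_int_cartanNumber_of_inner_neg hx hy hxy hpar
  have : k = -1 ∨ k = -2 ∨ k = -3 := by
    have : -3 ≤ k := by nlinarith
    omega
  rw [← hk]
  rcases this with rfl | rfl | rfl <;> norm_num

theorem exists_cartanNumber_eq_neg_one_or_neg_two (hS : IsCrystallographic Sig) {β : V}
    (hβ : β ∈ Sig) (hx : x ∈ Sig) (hxβ : ⟪x, β⟫ ≠ 0) (hpar : ∀ c : ℝ, x ≠ c • β) :
    ∃ y ∈ Sig, (∀ c : ℝ, y ≠ c • β) ∧ (cartanNumber y β = -1 ∨ cartanNumber y β = -2) := by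
  wlog hneg : ⟪x, β⟫ < 0 generalizing x
  · refine this (hS.neg_mem hx) (by simpa using hxβ) (fun c h => hpar (-c) ?_) ?_
    · rw [neg_smul, ← h, neg_neg]
    · rw [inner_neg_left]
      exact neg_neg_of_pos (lt_of_le_of_ne (not_lt.1 hneg) hxβ.symm)
  rcases hS.cartanNumber_eq_of_inner_neg hx hβ hneg hpar with h | h | h
  · exact ⟨x, hx, hpar, Or.inl h⟩
  · exact ⟨x, hx, hpar, Or.inr h⟩
  refine ⟨x + β, hS.add_mem_of_inner_neg hx hβ hneg hpar, fun c hc => hpar (c - 1) ?_, Or.inl ?_⟩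
  · rw [sub_smul, one_smul, ← hc, add_sub_cancel_right]
  · rw [cartanNumber_add_self x (hS.ne_zero hβ), h]
    norm_num

end IsCrystallographic

theorem exists_mem_inner_ne_zero_of_irreducible {Sig : Set V}
    (hirr : ∀ S₁ S₂ : Set V, S₁.Nonempty → S₂.Nonempty → Sig = S₁ ∪ S₂ →
      (∀ x ∈ S₁, ∀ y ∈ S₂, ⟪x, y⟫ = 0) → False)
    {β z : V} (hβ : β ∈ Sig) (hz : z ∈ Sig) (hzβ : ⟪z, β⟫ = 0) :
    ∃ x ∈ Sig, ⟪x, β⟫ ≠ 0 ∧ ∀ c : ℝ, x ≠ c • β := by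
  by_contra! h
  refine hirr {x ∈ Sig | ∃ c : ℝ, x = c • β} {x ∈ Sig | ⟪x, β⟫ = 0}
    ⟨β, hβ, 1, (one_smul ℝ β).symm⟩ ⟨z, hz, hzβ⟩ ?_ ?_
  · ext x
    refine ⟨fun hx => ?_, by rintro (⟨hx, -⟩ | ⟨hx, -⟩) <;> exact hx⟩
    by_cases hxβ : ⟪x, β⟫ = 0
    · exact Or.inr ⟨hx, hxβ⟩
    · exact Or.inl ⟨hx, h x hx hxβ⟩
  · rintro x ⟨-, c, rfl⟩ y ⟨-, hy⟩
    rw [real_inner_smul_left, real_inner_comm, hy, mul_zero]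

section Basis

variable {ι : Type*} (b : Module.Basis ι ℝ V) {i : ι} {v : V}

theorem Module.Basis.real_inner_eq_repr_mul_of_forall_ne [Fintype ι]
    (h : ∀ j ≠ i, ⟪b j, v⟫ = 0) (x : V) : ⟪x, v⟫ = b.repr x i * ⟪b i, v⟫ := by
  conv_lhs => rw [← b.sum_repr x]
  rw [sum_inner, Finset.sum_eq_single i (fun j _ hj => by rw [real_inner_smul_left, h j hj,
    mul_zero]) (fun hi => absurd (Finset.mem_univ i) hi), real_inner_smul_left]

theorem Module.Basis.cartanNumber_eq_of_forall_ne [Fintype ι] (h : ∀ j ≠ i, ⟪b j, v⟫ = 0)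
    (hv : v ≠ 0) (x : V) : cartanNumber x v = 2 * b.repr x i / b.repr v i := by
  have hvv := b.real_inner_eq_repr_mul_of_forall_ne h v
  have hbv : ⟪b i, v⟫ ≠ 0 := fun h0 => hv (inner_self_eq_zero.1 (by rw [hvv, h0, mul_zero]))
  rw [cartanNumber, b.real_inner_eq_repr_mul_of_forall_ne h x, hvv, ← mul_assoc,
    mul_div_mul_right _ _ hbv]

def Module.Basis.SignCoherent (Sig : Set V) : Prop :=
  ∀ x ∈ Sig, (∀ i, 0 ≤ b.repr x i) ∨ (∀ i, b.repr x i ≤ 0)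

variable {b} {Sig : Set V}

theorem Module.Basis.SignCoherent.repr_nonpos_of_repr_neg (hb : b.SignCoherent Sig) {x : V}
    (hx : x ∈ Sig) (hi : b.repr x i < 0) (j : ι) : b.repr x j ≤ 0 :=
  (hb x hx).resolve_left (fun h => (h i).not_gt hi) j

theorem Module.Basis.SignCoherent.repr_nonneg_of_repr_pos (hb : b.SignCoherent Sig) {x : V}
    (hx : x ∈ Sig) (hi : 0 < b.repr x i) (j : ι) : 0 ≤ b.repr x j :=
  (hb x hx).resolve_right (fun h => (h i).not_gt hi) j

theorem exists_root_add_of_repr_eq_zero (hb : b.SignCoherent Sig) {β γ : V}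
    (hβi : b.repr β i < 0) (hγ : γ ∈ Sig) (hγi : b.repr γ i = 0) (hβγ : β + γ ∈ Sig) :
    ∃ γ ∈ Sig, (∀ c : ℝ, 0 < c → γ ≠ -c • β) ∧ ((∀ j, 0 ≤ b.repr γ j) ∨ b.repr γ i = 0) ∧
      β + γ ∈ Sig ∧ (∀ j, b.repr (β + γ) j ≤ 0) ∧ b.repr (β + γ) i ≠ 0 := by
  have hβγi : b.repr (β + γ) i = b.repr β i := by simp [hγi]
  refine ⟨γ, hγ, fun c hc h => ?_, Or.inr hγi, hβγ,
    hb.repr_nonpos_of_repr_neg hβγ (hβγi ▸ hβi), hβγi ▸ hβi.ne⟩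
  rw [h] at hγi
  simp [hc.ne', hβi.ne] at hγi

theorem exists_root_add_of_two_mul_repr_eq_neg (hb : b.SignCoherent Sig) {β γ : V}
    (hβi : b.repr β i < 0) (hγ : γ ∈ Sig) (hpar : ∀ c : ℝ, γ ≠ c • β)
    (hγi : 2 * b.repr γ i = -b.repr β i) (hβγ : β + γ ∈ Sig) :
    ∃ γ ∈ Sig, (∀ c : ℝ, 0 < c → γ ≠ -c • β) ∧ ((∀ j, 0 ≤ b.repr γ j) ∨ b.repr γ i = 0) ∧
      β + γ ∈ Sig ∧ (∀ j, b.repr (β + γ) j ≤ 0) ∧ b.repr (β + γ) i ≠ 0 := by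
  have hβγi : b.repr (β + γ) i < 0 := by simp only [map_add, Finsupp.add_apply]; linarith
  exact ⟨γ, hγ, fun c _ => hpar (-c), Or.inl (hb.repr_nonneg_of_repr_pos hγ (by linarith)),
    hβγ, hb.repr_nonpos_of_repr_neg hβγ hβγi, hβγi.ne⟩

theorem IsCrystallographic.exists_root_add_of_inner_ne_zero (hS : IsCrystallographic Sig)
    (hb : b.SignCoherent Sig) {β x : V} (hβ : β ∈ Sig) (hβi : b.repr β i < 0) (hx : x ∈ Sig)
    (hxi : b.repr x i = 0) (hxβ : ⟪x, β⟫ ≠ 0) :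
    ∃ γ ∈ Sig, (∀ c : ℝ, 0 < c → γ ≠ -c • β) ∧ ((∀ j, 0 ≤ b.repr γ j) ∨ b.repr γ i = 0) ∧
      β + γ ∈ Sig ∧ (∀ j, b.repr (β + γ) j ≤ 0) ∧ b.repr (β + γ) i ≠ 0 := by
  obtain ⟨γ, hγ, hγi, hβγ⟩ : ∃ γ ∈ Sig, b.repr γ i = 0 ∧ ⟪β, γ⟫ < 0 := by
    rcases hxβ.lt_or_gt with hlt | hgt
    · exact ⟨x, hx, hxi, by rwa [real_inner_comm]⟩
    · exact ⟨-x, hS.neg_mem hx, by simp [hxi], by rw [inner_neg_right, real_inner_comm]; linarith⟩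
  refine exists_root_add_of_repr_eq_zero hb hβi hγ hγi
    (hS.add_mem_of_inner_neg hβ hγ hβγ fun c hc => hβi.ne ?_)
  simp [hc, hγi]

theorem IsCrystallographic.exists_root_add_of_forall_ne_inner_eq_zero [Fintype ι]
    (hS : IsCrystallographic Sig) (hb : b.SignCoherent Sig) {β y : V} (hβ : β ∈ Sig)
    (hβi : b.repr β i < 0) (hβb : ∀ j ≠ i, ⟪b j, β⟫ = 0) (hy : y ∈ Sig)
    (hpar : ∀ c : ℝ, y ≠ c • β) (hyβ : cartanNumber y β = -1 ∨ cartanNumber y β = -2) :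
    ∃ γ ∈ Sig, (∀ c : ℝ, 0 < c → γ ≠ -c • β) ∧ ((∀ j, 0 ≤ b.repr γ j) ∨ b.repr γ i = 0) ∧
      β + γ ∈ Sig ∧ (∀ j, b.repr (β + γ) j ≤ 0) ∧ b.repr (β + γ) i ≠ 0 := by
  have hyi := b.cartanNumber_eq_of_forall_ne hβb (hS.ne_zero hβ) y
  have hβy : β + y ∈ Sig := by
    rw [add_comm]
    refine hS.add_mem_of_inner_neg hy hβ ?_ hpar
    rw [← cartanNumber_neg_iff (hS.ne_zero hβ)]
    rcases hyβ with h | h <;> rw [h] <;> norm_num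
  rcases hyβ with h | h <;> rw [h, eq_div_iff hβi.ne] at hyi
  · exact exists_root_add_of_two_mul_repr_eq_neg hb hβi hy hpar (by linarith) hβy
  · refine exists_root_add_of_repr_eq_zero hb hβi hβy ?_ ?_
    · simp only [map_add, Finsupp.add_apply]
      linarith
    · convert hS.add_two_smul_mem_of_cartanNumber_eq_neg_two hy hβ h using 1
      module

end Basis

end

theorem stmt17_general {V : Type*} [NormedAddCommGroup V] [InnerProductSpace ℝ V]
    (Sig : Set V) (h0 : (0 : V) ∉ Sig)
    (hrefl : ∀ α ∈ Sig, ∀ β ∈ Sig, β - (2 * ⟪β, α⟫ / ⟪α, α⟫) • α ∈ Sig)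
    (hcrys : ∀ α ∈ Sig, ∀ β ∈ Sig, ∃ k : ℤ, (k : ℝ) = 2 * ⟪β, α⟫ / ⟪α, α⟫)
    (hirr : ∀ S₁ S₂ : Set V, S₁.Nonempty → S₂.Nonempty → Sig = S₁ ∪ S₂ →
      (∀ x ∈ S₁, ∀ y ∈ S₂, ⟪x, y⟫ = 0) → False)
    (hrank : 2 ≤ Module.finrank ℝ V)
    {ι : Type*} [Fintype ι] (b : Module.Basis ι ℝ V)
    (hbSig : Set.range b ⊆ Sig)
    (hbase : ∀ β ∈ Sig, (∀ i, 0 ≤ b.repr β i) ∨ (∀ i, b.repr β i ≤ 0))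
    (i₀ : ι) (β : V) (hβ : β ∈ Sig)
    (hβneg : ∀ i, b.repr β i ≤ 0) (hβi₀ : b.repr β i₀ ≠ 0) :
    ∃ γ ∈ Sig, (∀ c : ℝ, 0 < c → γ ≠ -c • β) ∧
      ((∀ i, 0 ≤ b.repr γ i) ∨ b.repr γ i₀ = 0) ∧
      β + γ ∈ Sig ∧ (∀ i, b.repr (β + γ) i ≤ 0) ∧ b.repr (β + γ) i₀ ≠ 0 := by
  have hS : IsCrystallographic Sig := ⟨h0, hrefl, hcrys⟩
  have hβi₀' : b.repr β i₀ < 0 := (hβneg i₀).lt_of_ne hβi₀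
  by_cases h : ∃ x ∈ Sig, b.repr x i₀ = 0 ∧ ⟪x, β⟫ ≠ 0
  · obtain ⟨x, hx, hxi₀, hxβ⟩ := h
    exact hS.exists_root_add_of_inner_ne_zero hbase hβ hβi₀' hx hxi₀ hxβ
  push Not at h
  have hβb : ∀ j ≠ i₀, ⟪b j, β⟫ = 0 := fun j hj => h _ (hbSig ⟨j, rfl⟩) (by simp [hj])
  obtain ⟨j, hj⟩ := Fintype.exists_ne_of_one_lt_card
    (by rw [← Module.finrank_eq_card_basis b]; omega) i₀
  obtain ⟨x, hx, hxβ, hxpar⟩ :=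
    exists_mem_inner_ne_zero_of_irreducible hirr hβ (hbSig ⟨j, rfl⟩) (hβb j hj)
  obtain ⟨y, hy, hypar, hyβ⟩ := hS.exists_cartanNumber_eq_neg_one_or_neg_two hβ hx hxβ hxpar
  exact hS.exists_root_add_of_forall_ne_inner_eq_zero hbase hβ hβi₀' hβb hy hypar hyβ

/-- Let `Sig` be an irreducible (possibly non-reduced) crystallographic root system of rank
at least `2` in a finite-dimensional real inner product space `V`, with base given by the
range of a basis `b : Basis ι ℝ V` (so every root has all coefficients `≥ 0` or all `≤ 0`
in this basis). Fix a simple root index `i₀`, and let `β` be a negative root whose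
`i₀`-coefficient is nonzero. Then there is a root `γ` such that: `γ` is not a positive
multiple of `-β`; `γ` is either a positive root or has zero `i₀`-coefficient; `β + γ` is a
root; and `β + γ` is a negative root with nonzero `i₀`-coefficient. -/
theorem stmt17 {V : Type*} [NormedAddCommGroup V] [InnerProductSpace ℝ V]
    [FiniteDimensional ℝ V]
    (Sig : Set V) (hfin : Sig.Finite) (h0 : (0 : V) ∉ Sig)
    (hspan : Submodule.span ℝ Sig = ⊤)
    (hrefl : ∀ α ∈ Sig, ∀ β ∈ Sig, β - (2 * ⟪β, α⟫ / ⟪α, α⟫) • α ∈ Sig)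
    (hcrys : ∀ α ∈ Sig, ∀ β ∈ Sig, ∃ k : ℤ, (k : ℝ) = 2 * ⟪β, α⟫ / ⟪α, α⟫)
    (hirr : ∀ S₁ S₂ : Set V, S₁.Nonempty → S₂.Nonempty → Sig = S₁ ∪ S₂ →
      (∀ x ∈ S₁, ∀ y ∈ S₂, ⟪x, y⟫ = 0) → False)
    (hrank : 2 ≤ Module.finrank ℝ V)
    {ι : Type*} [Fintype ι] (b : Module.Basis ι ℝ V)
    (hbSig : Set.range b ⊆ Sig)
    (hbase : ∀ β ∈ Sig, (∀ i, 0 ≤ b.repr β i) ∨ (∀ i, b.repr β i ≤ 0))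
    (i₀ : ι) (β : V) (hβ : β ∈ Sig)
    (hβneg : ∀ i, b.repr β i ≤ 0) (hβi₀ : b.repr β i₀ ≠ 0) :
    ∃ γ ∈ Sig, (∀ c : ℝ, 0 < c → γ ≠ -c • β) ∧
      ((∀ i, 0 ≤ b.repr γ i) ∨ b.repr γ i₀ = 0) ∧
      β + γ ∈ Sig ∧ (∀ i, b.repr (β + γ) i ≤ 0) ∧ b.repr (β + γ) i₀ ≠ 0 :=
  stmt17_general Sig h0 hrefl hcrys hirr hrank b hbSig hbase i₀ β hβ hβneg hβi₀
end
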